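/- arXiv:1206.3464 — 14 statements merged into one kernel-verified Lean document; each statement's English description precedes it below -/
import Mathlib

section
/- If J is an abelian complex structure on a real Lie algebra g (i.e. J² = -id and [Jx, Jy] = [x, y] for all x, y), then g is 2-step solvable, i.e. the derived subalgebra [g, g] is abelian. -/
/-!
Complexify. In `ℂ ⊗[ℝ] g` the subspaces `g^{1,0} = {u - i J u}` and `g^{0,1} = {u + i J u}` are
abelian precisely because `J` is abelian, and they add up to everything. A Lie ring which is the
sum of two abelian subgroups is metabelian (Petravchuk's Lie analogue of Itô's theorem on
products of abelian groups), and `g` embeds into its complexification.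
-/

open TensorProduct Complex LieAlgebra.ExtendScalars

section Petravchuk

variable {L : Type*} [LieRing L]

theorem lie_lie_comm_of_lie_eq_zero {x y : L} (h : ⁅x, y⁆ = 0) (p : L) :
    ⁅x, ⁅y, p⁆⁆ = ⁅y, ⁅x, p⁆⁆ := by
  rw [leibniz_lie, h, zero_lie, zero_add]

theorem lie_lie_right_comm_of_lie_eq_zero {x y : L} (h : ⁅x, y⁆ = 0) (p : L) :
    ⁅⁅p, x⁆, y⁆ = ⁅⁅p, y⁆, x⁆ := by
  rw [← lie_skew p x, ← lie_skew p y, neg_lie, neg_lie, ← lie_skew, ← lie_skew ⁅y, p⁆,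
    lie_lie_comm_of_lie_eq_zero h]

variable {A B : AddSubgroup L}

theorem lie_lie_lie_eq_zero_of_mem {a a' b b' : L}
    (hA : ∀ a ∈ A, ∀ a' ∈ A, ⁅a, a'⁆ = 0) (hB : ∀ b ∈ B, ∀ b' ∈ B, ⁅b, b'⁆ = 0)
    (hAB : A ⊔ B = ⊤) (ha : a ∈ A) (ha' : a' ∈ A) (hb : b ∈ B) (hb' : b' ∈ B) :
    ⁅⁅a, b⁆, ⁅a', b'⁆⁆ = 0 := by
  have decompose (x : L) : ∃ c ∈ A, ∃ d ∈ B, c + d = x :=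
    AddSubgroup.mem_sup.mp (hAB ▸ AddSubgroup.mem_top x)
  obtain ⟨c, hc, d, hd, hcd⟩ := decompose ⁅a, b'⁆
  obtain ⟨e, he, f, hf, hef⟩ := decompose ⁅a', b⁆
  have hcf : ⁅c, ⁅a', b⁆⁆ = ⁅c, f⁆ := by rw [← hef, lie_add, hA c hc e he, zero_add]
  have haf : ⁅a, ⁅a', b⁆⁆ = ⁅a, f⁆ := by rw [← hef, lie_add, hA a ha e he, zero_add]
  have hcb : ⁅c, b⁆ = ⁅⁅a, b'⁆, b⁆ := by rw [← hcd, add_lie, hB d hd b hb, add_zero]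
  have hcf' : ⁅⁅a, b'⁆, f⁆ = ⁅c, f⁆ := by rw [← hcd, add_lie, hB d hd f hf, add_zero]
  -- `ad a`, `ad a'` commute, and so do right multiplications by `b`, `b'`: pushing `⁅c, f⁆`
  -- through them brings it back, together with the bracket we want to kill.
  have : ⁅c, f⁆ = ⁅c, f⁆ + ⁅⁅a, b⁆, ⁅a', b'⁆⁆ := calc
    ⁅c, f⁆ = ⁅a', ⁅c, b⁆⁆ := by rw [← hcf, lie_lie_comm_of_lie_eq_zero (hA c hc a' ha')]
    _ = ⁅a', ⁅⁅a, b⁆, b'⁆⁆ := by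
      rw [hcb, lie_lie_right_comm_of_lie_eq_zero (hB b' hb' b hb)]
    _ = ⁅⁅a', ⁅a, b⁆⁆, b'⁆ + ⁅⁅a, b⁆, ⁅a', b'⁆⁆ := leibniz_lie _ _ _
    _ = ⁅⁅a, f⁆, b'⁆ + ⁅⁅a, b⁆, ⁅a', b'⁆⁆ := by
      rw [lie_lie_comm_of_lie_eq_zero (hA a' ha' a ha), haf]
    _ = ⁅c, f⁆ + ⁅⁅a, b⁆, ⁅a', b'⁆⁆ := by
      rw [lie_lie_right_comm_of_lie_eq_zero (hB f hf b' hb'), hcf']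
  exact left_eq_add.mp this

theorem lie_lie_lie_eq_zero_of_sup_eq_top
    (hA : ∀ a ∈ A, ∀ a' ∈ A, ⁅a, a'⁆ = 0) (hB : ∀ b ∈ B, ∀ b' ∈ B, ⁅b, b'⁆ = 0)
    (hAB : A ⊔ B = ⊤) (x y z w : L) : ⁅⁅x, y⁆, ⁅z, w⁆⁆ = 0 := by
  have decompose (x : L) : ∃ a ∈ A, ∃ b ∈ B, a + b = x :=
    AddSubgroup.mem_sup.mp (hAB ▸ AddSubgroup.mem_top x)
  have lie_add_add {a₁ b₁ a₂ b₂ : L} (ha₁ : a₁ ∈ A) (hb₁ : b₁ ∈ B) (ha₂ : a₂ ∈ A)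
      (hb₂ : b₂ ∈ B) : ⁅a₁ + b₁, a₂ + b₂⁆ = ⁅a₁, b₂⁆ - ⁅a₂, b₁⁆ := by
    rw [add_lie, lie_add, lie_add, hA a₁ ha₁ a₂ ha₂, hB b₁ hb₁ b₂ hb₂, ← lie_skew a₂ b₁]
    abel
  have mixed {a a' b b' : L} (ha : a ∈ A) (ha' : a' ∈ A) (hb : b ∈ B) (hb' : b' ∈ B) :=
    lie_lie_lie_eq_zero_of_mem hA hB hAB ha ha' hb hb'
  obtain ⟨a₁, ha₁, b₁, hb₁, rfl⟩ := decompose x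
  obtain ⟨a₂, ha₂, b₂, hb₂, rfl⟩ := decompose y
  obtain ⟨a₃, ha₃, b₃, hb₃, rfl⟩ := decompose z
  obtain ⟨a₄, ha₄, b₄, hb₄, rfl⟩ := decompose w
  rw [lie_add_add ha₁ hb₁ ha₂ hb₂, lie_add_add ha₃ hb₃ ha₄ hb₄, lie_sub, sub_lie, sub_lie,
    mixed ha₁ ha₃ hb₂ hb₄, mixed ha₁ ha₄ hb₂ hb₃, mixed ha₂ ha₃ hb₁ hb₄, mixed ha₂ ha₄ hb₁ hb₃,
    sub_self]

end Petravchuk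

section Complexification

variable {g : Type*} [LieRing g] [LieAlgebra ℝ g] (J : g →ₗ[ℝ] g)

theorem lie_apply_eq_neg_lie_apply (hJ2 : ∀ x, J (J x) = -x)
    (hab : ∀ x y : g, ⁅J x, J y⁆ = ⁅x, y⁆) (x y : g) : ⁅J x, y⁆ = -⁅x, J y⁆ := by
  rw [← hab, hJ2, neg_lie]

/-- `complexGraph J (-I)` is `g^{1,0}` and `complexGraph J I` is `g^{0,1}`. -/
noncomputable def complexGraph (s : ℂ) : AddSubgroup (ℂ ⊗[ℝ] g) :=
  (LinearMap.range (TensorProduct.mk ℝ ℂ g 1 + TensorProduct.mk ℝ ℂ g s ∘ₗ J)).toAddSubgroup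

theorem mem_complexGraph {s : ℂ} {v : ℂ ⊗[ℝ] g} :
    v ∈ complexGraph J s ↔ ∃ u, 1 ⊗ₜ u + s ⊗ₜ J u = v := by
  simp [complexGraph]

theorem lie_eq_zero_of_mem_complexGraph (hJ2 : ∀ x, J (J x) = -x)
    (hab : ∀ x y : g, ⁅J x, J y⁆ = ⁅x, y⁆) {s : ℂ} (hs : s * s = -1) :
    ∀ v ∈ complexGraph J s, ∀ w ∈ complexGraph J s, ⁅v, w⁆ = 0 := by
  simp only [mem_complexGraph]
  rintro _ ⟨u, rfl⟩ _ ⟨v, rfl⟩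
  simp only [add_lie, lie_add, bracket_tmul, hs, hab, lie_apply_eq_neg_lie_apply J hJ2 hab,
    tmul_neg, neg_tmul, one_mul, mul_one]
  abel

theorem complexGraph_I_sup_complexGraph_neg_I (hJ2 : ∀ x, J (J x) = -x) :
    complexGraph J I ⊔ complexGraph J (-I) = ⊤ := by
  have one_tmul_mem (y : g) : (1 : ℂ) ⊗ₜ[ℝ] y ∈ complexGraph J I ⊔ complexGraph J (-I) := by
    refine AddSubgroup.mem_sup.mpr ⟨_, (mem_complexGraph J).mpr ⟨(2⁻¹ : ℝ) • y, rfl⟩,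
      _, (mem_complexGraph J).mpr ⟨(2⁻¹ : ℝ) • y, rfl⟩, ?_⟩
    simp only [map_smul, tmul_smul, neg_tmul]
    module
  have I_tmul_mem (y : g) : I ⊗ₜ[ℝ] y ∈ complexGraph J I ⊔ complexGraph J (-I) := by
    refine AddSubgroup.mem_sup.mpr ⟨_, (mem_complexGraph J).mpr ⟨-(2⁻¹ : ℝ) • J y, rfl⟩,
      _, (mem_complexGraph J).mpr ⟨(2⁻¹ : ℝ) • J y, rfl⟩, ?_⟩
    simp only [map_smul, hJ2, tmul_smul, tmul_neg, neg_tmul]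
    module
  refine eq_top_iff.mpr fun v _ => ?_
  induction v using TensorProduct.induction_on with
  | zero => exact zero_mem _
  | add v w hv hw => exact add_mem (hv trivial) (hw trivial)
  | tmul c y =>
    have hc : c = c.re • (1 : ℂ) + c.im • I := by rw [real_smul, real_smul, mul_one, re_add_im]
    rw [hc, add_tmul, smul_tmul, smul_tmul]
    exact add_mem (one_tmul_mem _) (I_tmul_mem _)

end Complexification

theorem abelian_complex_structure_two_step_solvable_general
    {g : Type*} [LieRing g] [LieAlgebra ℝ g]
    (J : g →ₗ[ℝ] g) (hJ2 : ∀ x, J (J x) = -x)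
    (hab : ∀ x y : g, ⁅J x, J y⁆ = ⁅x, y⁆) :
    ∀ x y z w : g, ⁅(⁅x, y⁆ : g), (⁅z, w⁆ : g)⁆ = 0 := by
  intro x y z w
  have h := lie_lie_lie_eq_zero_of_sup_eq_top
    (lie_eq_zero_of_mem_complexGraph J hJ2 hab I_mul_I)
    (lie_eq_zero_of_mem_complexGraph J hJ2 hab (by rw [neg_mul_neg, I_mul_I]))
    (complexGraph_I_sup_complexGraph_neg_I J hJ2)
    ((1 : ℂ) ⊗ₜ x) (1 ⊗ₜ y) (1 ⊗ₜ z) (1 ⊗ₜ w)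
  rwa [bracket_tmul, bracket_tmul, bracket_tmul, one_mul, one_mul,
    Module.FaithfullyFlat.one_tmul_eq_zero_iff] at h

/-- If `J` is an abelian complex structure on a real Lie algebra `g`
(`J² = -id` and `⁅Jx, Jy⁆ = ⁅x, y⁆`), then `g` is 2-step solvable:
the derived subalgebra is abelian. -/
theorem abelian_complex_structure_two_step_solvable
    {g : Type*} [LieRing g] [LieAlgebra ℝ g] [FiniteDimensional ℝ g]
    (J : g →ₗ[ℝ] g) (hJ2 : ∀ x, J (J x) = -x)
    (hab : ∀ x y : g, ⁅J x, J y⁆ = ⁅x, y⁆) :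
    ∀ x y z w : g, ⁅(⁅x, y⁆ : g), (⁅z, w⁆ : g)⁆ = 0 :=
  abelian_complex_structure_two_step_solvable_general J hJ2 hab
end

section
/- Let (g, ω, J) be a pseudo-Kähler Lie algebra with abelian complex structure, and let · denote the left-symmetric product defined by ω via ω(x·y, z) = -ω(y, [x,z]). Then J(x·y) = (Jx)·y for all x, y ∈ g. -/
/-!
Compatibility of `ω` with `J` and `J² = -1` make `J` anti-self-adjoint for `ω`, and an abelian
complex structure satisfies `⁅J x, z⁆ = -⁅x, J z⁆`. Hence both `ω (J (x·y)) z` and `ω ((J x)·y) z`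
equal `ω y ⁅x, J z⁆`, and nondegeneracy of `ω` gives `J (x·y) = (J x)·y`.
-/

theorem lie_apply_left_eq_neg_lie_apply_right {L : Type*} [LieRing L] (J : L → L)
    (hJ2 : ∀ x, J (J x) = -x) (hab : ∀ x y : L, ⁅J x, J y⁆ = ⁅x, y⁆) (x z : L) :
    ⁅J x, z⁆ = -⁅x, J z⁆ := by
  have h := hab x (J z)
  rw [hJ2, lie_neg] at h
  rw [← h, neg_neg]

theorem LinearMap.apply_apply_left_eq_neg_apply_apply_right {R M : Type*} [CommRing R]
    [AddCommGroup M] [Module R M] (ω : M →ₗ[R] M →ₗ[R] R) (J : M →ₗ[R] M)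
    (hJ2 : ∀ x, J (J x) = -x) (hcompat : ∀ x y, ω (J x) (J y) = ω x y) (x y : M) :
    ω (J x) y = -ω x (J y) := by
  rw [← hcompat, hJ2, map_neg, LinearMap.neg_apply]

theorem LinearMap.eq_of_forall_apply_eq_of_separatingLeft {R M : Type*} [CommRing R] [AddCommGroup M] [Module R M]
    (ω : M →ₗ[R] M →ₗ[R] R) (hnd : ∀ x, (∀ y, ω x y = 0) → x = 0) {a b : M}
    (h : ∀ z, ω a z = ω b z) : a = b :=
  sub_eq_zero.mp <| hnd _ fun z => by rw [map_sub, LinearMap.sub_apply, h, sub_self]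

theorem leftSymmetric_commutes_with_J_general
    {g : Type*} [LieRing g] [LieAlgebra ℝ g]
    (ω : g →ₗ[ℝ] g →ₗ[ℝ] ℝ)
    (hnd : ∀ x, (∀ y, ω x y = 0) → x = 0)
    (J : g →ₗ[ℝ] g) (hJ2 : ∀ x, J (J x) = -x)
    (hab : ∀ x y : g, ⁅J x, J y⁆ = ⁅x, y⁆)
    (hcompat : ∀ x y, ω (J x) (J y) = ω x y)
    (p : g → g → g)
    (hp : ∀ x y z : g, ω (p x y) z = -ω y ⁅x, z⁆) :
    ∀ x y : g, J (p x y) = p (J x) y := by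
  intro x y
  refine LinearMap.eq_of_forall_apply_eq_of_separatingLeft ω hnd fun z => ?_
  calc ω (J (p x y)) z = -ω (p x y) (J z) :=
        LinearMap.apply_apply_left_eq_neg_apply_apply_right ω J hJ2 hcompat _ _
    _ = ω y ⁅x, J z⁆ := by rw [hp, neg_neg]
    _ = -ω y ⁅J x, z⁆ := by
        rw [lie_apply_left_eq_neg_lie_apply_right J hJ2 hab, map_neg, neg_neg]
    _ = ω (p (J x) y) z := (hp _ _ _).symm

/-- In a pseudo-Kähler Lie algebra with abelian complex structure, the
left-symmetric product defined by `ω` satisfies `J(x·y) = (Jx)·y`. -/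
theorem leftSymmetric_commutes_with_J
    {g : Type*} [LieRing g] [LieAlgebra ℝ g] [FiniteDimensional ℝ g]
    (ω : g →ₗ[ℝ] g →ₗ[ℝ] ℝ)
    (hskew : ∀ x y, ω x y = -ω y x)
    (hnd : ∀ x, (∀ y, ω x y = 0) → x = 0)
    (hcocycle : ∀ x y z : g, ω ⁅x, y⁆ z + ω ⁅y, z⁆ x + ω ⁅z, x⁆ y = 0)
    (J : g →ₗ[ℝ] g) (hJ2 : ∀ x, J (J x) = -x)
    (hab : ∀ x y : g, ⁅J x, J y⁆ = ⁅x, y⁆)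
    (hcompat : ∀ x y, ω (J x) (J y) = ω x y)
    (p : g → g → g)
    (hp : ∀ x y z : g, ω (p x y) z = -ω y ⁅x, z⁆) :
    ∀ x y : g, J (p x y) = p (J x) y :=
  leftSymmetric_commutes_with_J_general ω hnd J hJ2 hab hcompat p hp
end

section
/- Let A be the 3-dimensional real commutative associative algebra with basis a₁, a₂, a₃ and nonzero products a₁a₁ = a₂a₂ = a₃. Then the Lie algebra aff(A) = A ⊕ A with bracket [(a,b),(a',b')] = (0, ab' - a'b) admits no nondegenerate 2-cocycle: every 2-cocycle ω on aff(A) satisfies ω(E₆, x) = 0 for all x, where E₆ = (0, a₃). -/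
/-!
Every bracket of `aff(A)` is a multiple `c(x, y) • E₆` of the central element `E₆`, so for a
2-cocycle `ω` the functional `f = ω(E₆, ·)` satisfies the cyclic identity
`c(x,y) f(z) + c(y,z) f(x) + c(z,x) f(y) = 0`. A pair `u, v` with `c(u, v) = 1` then forces
`f` into the span of `c(v, ·)` and `c(·, u)`; the two mutually `c`-orthogonal pairs
`(E₁, E₄)` and `(E₂, E₅)` make these spans kill each other, so `f = 0`.
-/

section CyclicIdentity

variable {V R : Type*} [CommRing R] {c : V → V → R} {f : V → R}

theorem apply_eq_of_cyclic_sum_eq_zero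
    (hcyc : ∀ x y z, c x y * f z + c y z * f x + c z x * f y = 0)
    {u v : V} (huv : c u v = 1) (z : V) :
    f z = -(c v z * f u + c z u * f v) := by
  have := hcyc u v z
  rw [huv] at this
  linear_combination this

theorem eq_zero_of_cyclic_sum_eq_zero
    (hcyc : ∀ x y z, c x y * f z + c y z * f x + c z x * f y = 0)
    {u₁ v₁ u₂ v₂ : V} (h₁ : c u₁ v₁ = 1) (h₂ : c u₂ v₂ = 1)
    (hv₂u₁ : c v₂ u₁ = 0) (hu₁u₂ : c u₁ u₂ = 0) (hv₂v₁ : c v₂ v₁ = 0) (hv₁u₂ : c v₁ u₂ = 0) :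
    f = 0 := by
  have hu₁ : f u₁ = 0 := by
    rw [apply_eq_of_cyclic_sum_eq_zero hcyc h₂ u₁, hv₂u₁, hu₁u₂]; ring
  have hv₁ : f v₁ = 0 := by
    rw [apply_eq_of_cyclic_sum_eq_zero hcyc h₂ v₁, hv₂v₁, hv₁u₂]; ring
  funext z
  rw [apply_eq_of_cyclic_sum_eq_zero hcyc h₁ z, hu₁, hv₁]; simp

end CyclicIdentity

def affBracketCoeff (x y : Fin 6 → ℝ) : ℝ :=
  x 0 * y 3 + x 1 * y 4 - y 0 * x 3 - y 1 * x 4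

theorem aff_of_three_dim_algebra_no_symplectic_general
    (ω : (Fin 6 → ℝ) →ₗ[ℝ] (Fin 6 → ℝ) →ₗ[ℝ] ℝ)
    (br : (Fin 6 → ℝ) → (Fin 6 → ℝ) → (Fin 6 → ℝ))
    (hbr : ∀ x y, br x y =
      fun j => if j = 5 then x 0 * y 3 + x 1 * y 4 - y 0 * x 3 - y 1 * x 4 else 0)
    (hcoc : ∀ x y z, ω (br x y) z + ω (br y z) x + ω (br z x) y = 0) :
    ∀ x, ω (Pi.single (5 : Fin 6) (1 : ℝ)) x = 0 := by
  have hbr_smul : ∀ x y, br x y = affBracketCoeff x y • Pi.single (5 : Fin 6) (1 : ℝ) := by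
    intro x y
    funext j
    rw [hbr, affBracketCoeff]
    fin_cases j <;> simp
  have hcyc : ∀ x y z, affBracketCoeff x y * ω (Pi.single 5 1) z
      + affBracketCoeff y z * ω (Pi.single 5 1) x
      + affBracketCoeff z x * ω (Pi.single 5 1) y = 0 := by
    intro x y z
    simpa only [hbr_smul, map_smul, LinearMap.smul_apply, smul_eq_mul] using hcoc x y z
  have hf := eq_zero_of_cyclic_sum_eq_zero hcyc
    (u₁ := Pi.single 0 1) (v₁ := Pi.single 3 1) (u₂ := Pi.single 1 1) (v₂ := Pi.single 4 1)
    (by simp [affBracketCoeff]) (by simp [affBracketCoeff]) (by simp [affBracketCoeff])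
    (by simp [affBracketCoeff]) (by simp [affBracketCoeff]) (by simp [affBracketCoeff])
  exact fun x => congrFun hf x

/-- In coordinates, `aff(A)` for the 3-dimensional algebra `A` with basis `a₁,a₂,a₃`
and nonzero products `a₁a₁ = a₂a₂ = a₃` is `ℝ⁶` with the bracket below (the only
nontrivial brackets being `[E₁,E₄] = [E₂,E₅] = E₆`).  Every 2-cocycle `ω` on this
Lie algebra satisfies `ω(E₆, x) = 0` for all `x`; hence no 2-cocycle is nondegenerate. -/
theorem aff_of_three_dim_algebra_no_symplectic
    (ω : (Fin 6 → ℝ) →ₗ[ℝ] (Fin 6 → ℝ) →ₗ[ℝ] ℝ)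
    (br : (Fin 6 → ℝ) → (Fin 6 → ℝ) → (Fin 6 → ℝ))
    (hbr : ∀ x y, br x y =
      fun j => if j = 5 then x 0 * y 3 + x 1 * y 4 - y 0 * x 3 - y 1 * x 4 else 0)
    (hskew : ∀ x y, ω x y = -ω y x)
    (hcoc : ∀ x y z, ω (br x y) z + ω (br y z) x + ω (br z x) y = 0) :
    ∀ x, ω (Pi.single (5 : Fin 6) (1 : ℝ)) x = 0 :=
  aff_of_three_dim_algebra_no_symplectic_general ω br hbr hcoc
end

section
/- Let (U, H) be a pair where U is a finite-dimensional complex commutative associative algebra and H a nondegenerate hermitian sesquilinear form on U satisfying x·(R_z* y) = y·(R_z* x) for all x,y,z ∈ U, where R_z is multiplication by z and R_z* its H-adjoint. Then the underlying real vector space of U with the bracket [x,y] = R_y* x - R_x* y is a real Lie algebra, and with J x = i x and ω(x,y) = Im H(x,y), the triple (g_U, ω, J) is a pseudo-Kähler Lie algebra with abelian complex structure. -/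
/-!
Everything comes from moving a multiplication across `H` with `R_z*`. First,
`H([x,y], w) = H(x, yw) - H(y, xw)`, whose cyclic sum vanishes by commutativity, so `Im H` is a
2-cocycle. Applying this twice, `H([[x,y],z], w)` splits into terms `H(x, yzw)`, which cancel
cyclically, and terms `H(z · R_x* y, w)`, which after one more use of the adjoint and of
APK-compatibility cancel in pairs; nondegeneracy of `H` gives the Jacobi identity. The remaining
properties follow because `R_z* x` is ℂ-linear in `x` and conjugate-linear in `z`.
-/

/-- The bracket `[x,y] = R_y* x - R_x* y` associated to an APK-compatible pair. -/
def brkt {U : Type*} [Sub U] (Rstar : U → U → U) (x y : U) : U :=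
  Rstar y x - Rstar x y

open ComplexConjugate

structure IsHermitianForm {U : Type*} [Add U] [SMul ℂ U] (H : U → U → ℂ) : Prop where
  add_left : ∀ x x' y : U, H (x + x') y = H x y + H x' y
  smul_left : ∀ (c : ℂ) (x y : U), H (c • x) y = c * H x y
  conj_symm : ∀ x y : U, H x y = conj (H y x)

namespace IsHermitianForm

variable {U : Type*} [AddGroup U] [SMul ℂ U] {H : U → U → ℂ}

theorem sub_left (hH : IsHermitianForm H) (x x' y : U) : H (x - x') y = H x y - H x' y := by
  rw [eq_sub_iff_add_eq, ← hH.add_left, sub_add_cancel]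

theorem add_right (hH : IsHermitianForm H) (x y y' : U) : H x (y + y') = H x y + H x y' := by
  rw [hH.conj_symm, hH.add_left, map_add, ← hH.conj_symm, ← hH.conj_symm]

theorem sub_right (hH : IsHermitianForm H) (x y y' : U) : H x (y - y') = H x y - H x y' := by
  rw [hH.conj_symm, hH.sub_left, map_sub, ← hH.conj_symm, ← hH.conj_symm]

theorem smul_right (hH : IsHermitianForm H) (c : ℂ) (x y : U) : H x (c • y) = conj c * H x y := by
  rw [hH.conj_symm, hH.smul_left, map_mul, ← hH.conj_symm]

theorem im_antisymm (hH : IsHermitianForm H) (x y : U) : (H x y).im = -(H y x).im := by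
  rw [hH.conj_symm x y, Complex.conj_im]

theorem I_smul_I_smul (hH : IsHermitianForm H) (x y : U) :
    H (Complex.I • x) (Complex.I • y) = H x y := by
  rw [hH.smul_left, hH.smul_right, Complex.conj_I, ← mul_assoc, mul_neg, Complex.I_mul_I,
    neg_neg, one_mul]

theorem eq_of_forall_eq (hH : IsHermitianForm H) (hnd : ∀ x : U, (∀ y : U, H x y = 0) → x = 0)
    {a b : U} (h : ∀ y, H a y = H b y) : a = b :=
  sub_eq_zero.mp <| hnd _ fun y => by rw [hH.sub_left, h, sub_self]

-- `Re H(x, y) = Im H(x, i y)`, so `Im H` already determines `H`.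
theorem eq_zero_of_forall_im_eq_zero (hH : IsHermitianForm H)
    (hnd : ∀ x : U, (∀ y : U, H x y = 0) → x = 0) {x : U} (h : ∀ y, (H x y).im = 0) : x = 0 := by
  refine hnd x fun y => Complex.ext ?_ (h y)
  simpa [hH.smul_right, Complex.conj_I] using h (Complex.I • y)

end IsHermitianForm

section Adjoint

variable {U : Type*} [NonUnitalCommRing U] [Module ℂ U] {H : U → U → ℂ} {Rstar : U → U → U}

theorem rstar_add_right (hH : IsHermitianForm H) (hnd : ∀ x : U, (∀ y : U, H x y = 0) → x = 0)
    (hadj : ∀ z x y : U, H (Rstar z x) y = H x (z * y)) (z x x' : U) :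
    Rstar z (x + x') = Rstar z x + Rstar z x' :=
  hH.eq_of_forall_eq hnd fun y => by rw [hadj, hH.add_left, hH.add_left, hadj, hadj]

theorem rstar_add_left (hH : IsHermitianForm H) (hnd : ∀ x : U, (∀ y : U, H x y = 0) → x = 0)
    (hadj : ∀ z x y : U, H (Rstar z x) y = H x (z * y)) (z z' x : U) :
    Rstar (z + z') x = Rstar z x + Rstar z' x :=
  hH.eq_of_forall_eq hnd fun y => by rw [hadj, add_mul, hH.add_right, hH.add_left, hadj, hadj]

theorem rstar_smul_right (hH : IsHermitianForm H) (hnd : ∀ x : U, (∀ y : U, H x y = 0) → x = 0)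
    (hadj : ∀ z x y : U, H (Rstar z x) y = H x (z * y)) (c : ℂ) (z x : U) :
    Rstar z (c • x) = c • Rstar z x :=
  hH.eq_of_forall_eq hnd fun y => by rw [hadj, hH.smul_left, hH.smul_left, hadj]

theorem rstar_smul_left [IsScalarTower ℂ U U] (hH : IsHermitianForm H)
    (hnd : ∀ x : U, (∀ y : U, H x y = 0) → x = 0)
    (hadj : ∀ z x y : U, H (Rstar z x) y = H x (z * y)) (c : ℂ) (z x : U) :
    Rstar (c • z) x = conj c • Rstar z x :=
  hH.eq_of_forall_eq hnd fun y => by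
    rw [hadj, smul_mul_assoc, hH.smul_right, hH.smul_left, hadj]

end Adjoint

section Bracket

variable {U : Type*} [NonUnitalCommRing U] [Module ℂ U] {H : U → U → ℂ} {Rstar : U → U → U}

theorem brkt_add_left (hH : IsHermitianForm H) (hnd : ∀ x : U, (∀ y : U, H x y = 0) → x = 0)
    (hadj : ∀ z x y : U, H (Rstar z x) y = H x (z * y)) (x x' y : U) :
    brkt Rstar (x + x') y = brkt Rstar x y + brkt Rstar x' y := by
  simp only [brkt, rstar_add_left hH hnd hadj, rstar_add_right hH hnd hadj]
  abel

theorem brkt_add_right (hH : IsHermitianForm H) (hnd : ∀ x : U, (∀ y : U, H x y = 0) → x = 0)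
    (hadj : ∀ z x y : U, H (Rstar z x) y = H x (z * y)) (x y y' : U) :
    brkt Rstar x (y + y') = brkt Rstar x y + brkt Rstar x y' := by
  simp only [brkt, rstar_add_left hH hnd hadj, rstar_add_right hH hnd hadj]
  abel

section RealSMul

variable [Module ℝ U] [IsScalarTower ℝ ℂ U]

theorem rstar_real_smul_left [IsScalarTower ℂ U U] (hH : IsHermitianForm H)
    (hnd : ∀ x : U, (∀ y : U, H x y = 0) → x = 0)
    (hadj : ∀ z x y : U, H (Rstar z x) y = H x (z * y)) (r : ℝ) (z x : U) :
    Rstar (r • z) x = r • Rstar z x := by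
  rw [← algebraMap_smul ℂ r z, rstar_smul_left hH hnd hadj, Complex.coe_algebraMap,
    Complex.conj_ofReal, ← Complex.coe_algebraMap, algebraMap_smul]

theorem rstar_real_smul_right (hH : IsHermitianForm H)
    (hnd : ∀ x : U, (∀ y : U, H x y = 0) → x = 0)
    (hadj : ∀ z x y : U, H (Rstar z x) y = H x (z * y)) (r : ℝ) (z x : U) :
    Rstar z (r • x) = r • Rstar z x := by
  rw [← algebraMap_smul ℂ r x, rstar_smul_right hH hnd hadj, algebraMap_smul]

theorem brkt_real_smul_left [IsScalarTower ℂ U U] (hH : IsHermitianForm H)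
    (hnd : ∀ x : U, (∀ y : U, H x y = 0) → x = 0)
    (hadj : ∀ z x y : U, H (Rstar z x) y = H x (z * y)) (r : ℝ) (x y : U) :
    brkt Rstar (r • x) y = r • brkt Rstar x y := by
  simp only [brkt, rstar_real_smul_left hH hnd hadj, rstar_real_smul_right hH hnd hadj, smul_sub]

theorem brkt_real_smul_right [IsScalarTower ℂ U U] (hH : IsHermitianForm H)
    (hnd : ∀ x : U, (∀ y : U, H x y = 0) → x = 0)
    (hadj : ∀ z x y : U, H (Rstar z x) y = H x (z * y)) (r : ℝ) (x y : U) :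
    brkt Rstar x (r • y) = r • brkt Rstar x y := by
  simp only [brkt, rstar_real_smul_left hH hnd hadj, rstar_real_smul_right hH hnd hadj, smul_sub]

end RealSMul

theorem brkt_I_smul_I_smul [IsScalarTower ℂ U U] (hH : IsHermitianForm H)
    (hnd : ∀ x : U, (∀ y : U, H x y = 0) → x = 0)
    (hadj : ∀ z x y : U, H (Rstar z x) y = H x (z * y)) (x y : U) :
    brkt Rstar (Complex.I • x) (Complex.I • y) = brkt Rstar x y := by
  have hI : ∀ a b : U, Rstar (Complex.I • a) (Complex.I • b) = Rstar a b := fun a b => by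
    rw [rstar_smul_left hH hnd hadj, rstar_smul_right hH hnd hadj, smul_smul, Complex.conj_I,
      neg_mul, Complex.I_mul_I, neg_neg, one_smul]
  simp only [brkt, hI]

theorem form_brkt (hH : IsHermitianForm H) (hadj : ∀ z x y : U, H (Rstar z x) y = H x (z * y))
    (x y w : U) : H (brkt Rstar x y) w = H x (y * w) - H y (x * w) := by
  rw [brkt, hH.sub_left, hadj, hadj]

theorem form_brkt_cyclic (hH : IsHermitianForm H)
    (hadj : ∀ z x y : U, H (Rstar z x) y = H x (z * y)) (x y z : U) :
    H (brkt Rstar x y) z + H (brkt Rstar y z) x + H (brkt Rstar z x) y = 0 := by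
  simp only [form_brkt hH hadj, mul_comm y z, mul_comm z x, mul_comm x y]
  ring

theorem form_rstar_mul (hH : IsHermitianForm H)
    (hadj : ∀ z x y : U, H (Rstar z x) y = H x (z * y))
    (hapk : ∀ x y z : U, x * Rstar z y = y * Rstar z x) (x y z w : U) :
    H z (Rstar y x * w) = H (z * Rstar x y) w := by
  rw [mul_comm, hapk w x y, ← hadj, hH.conj_symm, hadj, hapk y z x, ← hH.conj_symm]

theorem form_brkt_brkt (hH : IsHermitianForm H)
    (hadj : ∀ z x y : U, H (Rstar z x) y = H x (z * y))
    (hapk : ∀ x y z : U, x * Rstar z y = y * Rstar z x) (x y z w : U) :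
    H (brkt Rstar (brkt Rstar x y) z) w =
      H x (y * (z * w)) - H y (x * (z * w)) - H (z * Rstar x y) w + H (z * Rstar y x) w := by
  rw [form_brkt hH hadj, form_brkt hH hadj, brkt, sub_mul, hH.sub_right,
    form_rstar_mul hH hadj hapk, form_rstar_mul hH hadj hapk]
  ring

theorem brkt_jacobi (hH : IsHermitianForm H) (hnd : ∀ x : U, (∀ y : U, H x y = 0) → x = 0)
    (hadj : ∀ z x y : U, H (Rstar z x) y = H x (z * y))
    (hapk : ∀ x y z : U, x * Rstar z y = y * Rstar z x) (x y z : U) :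
    brkt Rstar (brkt Rstar x y) z + brkt Rstar (brkt Rstar y z) x +
      brkt Rstar (brkt Rstar z x) y = 0 := by
  refine hnd _ fun w => ?_
  rw [hH.add_left, hH.add_left, form_brkt_brkt hH hadj hapk, form_brkt_brkt hH hadj hapk,
    form_brkt_brkt hH hadj hapk, hapk z y x, hapk x z y, hapk y x z,
    mul_left_comm z y w, mul_left_comm x z w, mul_left_comm y x w]
  ring

end Bracket

theorem apk_pair_gives_abelian_pseudoKaehler_general
    {U : Type*} [NonUnitalCommRing U] [Module ℂ U]
    [IsScalarTower ℂ U U]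
    (H : U → U → ℂ)
    (Hadd : ∀ x x' y : U, H (x + x') y = H x y + H x' y)
    (Hsmul : ∀ (c : ℂ) (x y : U), H (c • x) y = c * H x y)
    (Hherm : ∀ x y : U, H x y = starRingEnd ℂ (H y x))
    (Hnd : ∀ x : U, (∀ y : U, H x y = 0) → x = 0)
    (Rstar : U → U → U)
    (hadj : ∀ z x y : U, H (Rstar z x) y = H x (z * y))
    (hapk : ∀ x y z : U, x * Rstar z y = y * Rstar z x)
    [Module ℝ U] [IsScalarTower ℝ ℂ U] :
    -- the bracket is ℝ-bilinear (additivity and real homogeneity in each slot)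
    (∀ x x' y : U, brkt Rstar (x + x') y = brkt Rstar x y + brkt Rstar x' y) ∧
    (∀ (r : ℝ) (x y : U), brkt Rstar (r • x) y = r • brkt Rstar x y) ∧
    (∀ x x' y : U, brkt Rstar y (x + x') = brkt Rstar y x + brkt Rstar y x') ∧
    (∀ (r : ℝ) (x y : U), brkt Rstar y (r • x) = r • brkt Rstar y x) ∧
    -- the bracket is alternating and satisfies the Jacobi identity
    (∀ x : U, brkt Rstar x x = 0) ∧
    (∀ x y z : U,
      brkt Rstar (brkt Rstar x y) z + brkt Rstar (brkt Rstar y z) x +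
        brkt Rstar (brkt Rstar z x) y = 0) ∧
    -- J x = i x is an abelian complex structure
    (∀ x : U, (Complex.I • (Complex.I • x) : U) = -x) ∧
    (∀ x y : U, brkt Rstar (Complex.I • x) (Complex.I • y) = brkt Rstar x y) ∧
    -- ω = Im H is a nondegenerate 2-cocycle compatible with J
    (∀ x y : U, (H x y).im = -(H y x).im) ∧
    (∀ x : U, (∀ y : U, (H x y).im = 0) → x = 0) ∧
    (∀ x y z : U,
      (H (brkt Rstar x y) z).im + (H (brkt Rstar y z) x).im +
        (H (brkt Rstar z x) y).im = 0) ∧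
    (∀ x y : U, (H (Complex.I • x) (Complex.I • y)).im = (H x y).im) := by
  have hH : IsHermitianForm H := ⟨Hadd, Hsmul, Hherm⟩
  exact ⟨brkt_add_left hH Hnd hadj, brkt_real_smul_left hH Hnd hadj,
    fun x x' y => brkt_add_right hH Hnd hadj y x x',
    fun r x y => brkt_real_smul_right hH Hnd hadj r y x,
    fun x => sub_self _,
    brkt_jacobi hH Hnd hadj hapk,
    fun x => by rw [smul_smul, Complex.I_mul_I, neg_one_smul],
    brkt_I_smul_I_smul hH Hnd hadj,
    hH.im_antisymm,
    fun x => hH.eq_zero_of_forall_im_eq_zero Hnd,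
    fun x y z => by simpa using congrArg Complex.im (form_brkt_cyclic hH hadj x y z),
    fun x y => by rw [hH.I_smul_I_smul]⟩

/-- An APK-compatible pair `(U, H)` yields a real Lie algebra `g_U` (the underlying
real vector space of `U` with bracket `[x,y] = R_y* x - R_x* y`), and together with
`J x = i x` and `ω x y = Im (H x y)` it is a pseudo-Kähler Lie algebra with abelian
complex structure. -/
theorem apk_pair_gives_abelian_pseudoKaehler
    {U : Type*} [NonUnitalCommRing U] [Module ℂ U]
    [SMulCommClass ℂ U U] [IsScalarTower ℂ U U] [FiniteDimensional ℂ U]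
    (H : U → U → ℂ)
    (Hadd : ∀ x x' y : U, H (x + x') y = H x y + H x' y)
    (Hsmul : ∀ (c : ℂ) (x y : U), H (c • x) y = c * H x y)
    (Hherm : ∀ x y : U, H x y = starRingEnd ℂ (H y x))
    (Hnd : ∀ x : U, (∀ y : U, H x y = 0) → x = 0)
    (Rstar : U → U → U)
    (hadj : ∀ z x y : U, H (Rstar z x) y = H x (z * y))
    (hapk : ∀ x y z : U, x * Rstar z y = y * Rstar z x)
    [Module ℝ U] [IsScalarTower ℝ ℂ U] :
    -- the bracket is ℝ-bilinear (additivity and real homogeneity in each slot)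
    (∀ x x' y : U, brkt Rstar (x + x') y = brkt Rstar x y + brkt Rstar x' y) ∧
    (∀ (r : ℝ) (x y : U), brkt Rstar (r • x) y = r • brkt Rstar x y) ∧
    (∀ x x' y : U, brkt Rstar y (x + x') = brkt Rstar y x + brkt Rstar y x') ∧
    (∀ (r : ℝ) (x y : U), brkt Rstar y (r • x) = r • brkt Rstar y x) ∧
    -- the bracket is alternating and satisfies the Jacobi identity
    (∀ x : U, brkt Rstar x x = 0) ∧
    (∀ x y z : U,
      brkt Rstar (brkt Rstar x y) z + brkt Rstar (brkt Rstar y z) x +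
        brkt Rstar (brkt Rstar z x) y = 0) ∧
    -- J x = i x is an abelian complex structure
    (∀ x : U, (Complex.I • (Complex.I • x) : U) = -x) ∧
    (∀ x y : U, brkt Rstar (Complex.I • x) (Complex.I • y) = brkt Rstar x y) ∧
    -- ω = Im H is a nondegenerate 2-cocycle compatible with J
    (∀ x y : U, (H x y).im = -(H y x).im) ∧
    (∀ x : U, (∀ y : U, (H x y).im = 0) → x = 0) ∧
    (∀ x y z : U,
      (H (brkt Rstar x y) z).im + (H (brkt Rstar y z) x).im +
        (H (brkt Rstar z x) y).im = 0) ∧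
    (∀ x y : U, (H (Complex.I • x) (Complex.I • y)).im = (H x y).im) :=
  apk_pair_gives_abelian_pseudoKaehler_general H Hadd Hsmul Hherm Hnd Rstar hadj hapk
end

section
/- If (U, H) is an APK-compatible pair, then R_{[x,y]}* = R_y R_x* - R_x R_y* for all x, y ∈ U, where [x,y] = R_y* x - R_x* y. -/
/-!
Pair both sides with an arbitrary `w`. Moving every multiplication across `H` turns
`H (R_{[x,y]}* z) w` into `H z ((R_y* x - R_x* y) w)` and the right-hand side into
`H z (x R_y* w - y R_x* w)`; APK-compatibility says `(R_y* x) w = x (R_y* w)`, so the two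
agree, and nondegeneracy concludes.
-/

theorem form_sub_left {U 𝕜 : Type*} [AddGroup U] [AddGroup 𝕜] (H : U → U → 𝕜)
    (Hadd : ∀ x x' y : U, H (x + x') y = H x y + H x' y) (a b c : U) :
    H (a - b) c = H a c - H b c :=
  map_sub (AddMonoidHom.mk' (H · c) fun x x' => Hadd x x' c) a b

theorem form_sub_right {U 𝕜 : Type*} [AddGroup U] [CommRing 𝕜] [StarRing 𝕜] (H : U → U → 𝕜)
    (Hadd : ∀ x x' y : U, H (x + x') y = H x y + H x' y)
    (Hherm : ∀ x y : U, H x y = starRingEnd 𝕜 (H y x)) (a b c : U) :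
    H a (b - c) = H a b - H a c := by
  rw [Hherm, form_sub_left H Hadd, map_sub, ← Hherm, ← Hherm]

theorem eq_of_forall_form_left_eq {U 𝕜 : Type*} [AddGroup U] [AddGroup 𝕜] (H : U → U → 𝕜)
    (Hadd : ∀ x x' y : U, H (x + x') y = H x y + H x' y)
    (Hnd : ∀ x : U, (∀ y : U, H x y = 0) → x = 0) {a b : U} (h : ∀ w, H a w = H b w) :
    a = b :=
  sub_eq_zero.mp <| Hnd _ fun w => by rw [form_sub_left H Hadd, h, sub_self]

theorem form_mul_left_eq {U 𝕜 : Type*} [Mul U] [CommRing 𝕜] [StarRing 𝕜] (H : U → U → 𝕜)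
    (Hherm : ∀ x y : U, H x y = starRingEnd 𝕜 (H y x)) (Rstar : U → U → U)
    (hadj : ∀ z x y : U, H (Rstar z x) y = H x (z * y)) (u v w : U) :
    H (u * v) w = H v (Rstar u w) := by
  rw [Hherm, ← hadj, ← Hherm]

theorem Rstar_mul_eq_mul_Rstar {U : Type*} [CommMagma U] (Rstar : U → U → U)
    (hapk : ∀ x y z : U, x * Rstar z y = y * Rstar z x) (x y w : U) :
    Rstar y x * w = x * Rstar y w := by
  rw [mul_comm, hapk]

theorem apk_Rstar_bracket_general
    {U : Type*} [NonUnitalCommRing U]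
    (H : U → U → ℂ)
    (Hadd : ∀ x x' y : U, H (x + x') y = H x y + H x' y)
    (Hherm : ∀ x y : U, H x y = starRingEnd ℂ (H y x))
    (Hnd : ∀ x : U, (∀ y : U, H x y = 0) → x = 0)
    (Rstar : U → U → U)
    (hadj : ∀ z x y : U, H (Rstar z x) y = H x (z * y))
    (hapk : ∀ x y z : U, x * Rstar z y = y * Rstar z x) :
    ∀ x y z : U,
      Rstar (Rstar y x - Rstar x y) z = y * Rstar x z - x * Rstar y z := by
  intro x y z
  refine eq_of_forall_form_left_eq H Hadd Hnd fun w => ?_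
  calc H (Rstar (Rstar y x - Rstar x y) z) w
      = H z (Rstar y x * w - Rstar x y * w) := by rw [hadj, sub_mul]
    _ = H z (x * Rstar y w) - H z (y * Rstar x w) := by
      rw [Rstar_mul_eq_mul_Rstar Rstar hapk, Rstar_mul_eq_mul_Rstar Rstar hapk,
        form_sub_right H Hadd Hherm]
    _ = H (y * Rstar x z - x * Rstar y z) w := by
      rw [form_sub_left H Hadd, form_mul_left_eq H Hherm Rstar hadj,
        form_mul_left_eq H Hherm Rstar hadj, hadj, hadj]

/-- For an APK-compatible pair, `R_{[x,y]}* = R_y R_x* - R_x R_y*`,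
where `[x,y] = R_y* x - R_x* y`. -/
theorem apk_Rstar_bracket
    {U : Type*} [NonUnitalCommRing U] [Module ℂ U]
    [SMulCommClass ℂ U U] [IsScalarTower ℂ U U] [FiniteDimensional ℂ U]
    (H : U → U → ℂ)
    (Hadd : ∀ x x' y : U, H (x + x') y = H x y + H x' y)
    (Hsmul : ∀ (c : ℂ) (x y : U), H (c • x) y = c * H x y)
    (Hherm : ∀ x y : U, H x y = starRingEnd ℂ (H y x))
    (Hnd : ∀ x : U, (∀ y : U, H x y = 0) → x = 0)
    (Rstar : U → U → U)
    (hadj : ∀ z x y : U, H (Rstar z x) y = H x (z * y))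
    (hapk : ∀ x y z : U, x * Rstar z y = y * Rstar z x) :
    ∀ x y z : U,
      Rstar (Rstar y x - Rstar x y) z = y * Rstar x z - x * Rstar y z :=
  apk_Rstar_bracket_general H Hadd Hherm Hnd Rstar hadj hapk
end

section
/- If (U, H) is an APK-compatible pair, then (R_x* R_z - R_z R_x*) y lies in the annihilator of U for all x, y, z ∈ U. -/
theorem map_mul_mul_eq_of_mul_map_symm {S : Type*} [CommSemigroup S] {g : S → S}
    (hg : ∀ a b : S, a * g b = b * g a) (z y u : S) :
    g (z * y) * u = z * g y * u :=
  calc g (z * y) * u = z * (y * g u) := by rw [mul_comm, hg, mul_assoc]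
    _ = z * g y * u := by rw [hg, mul_comm u, mul_assoc]

theorem apk_commutator_in_annihilator_general
    {U : Type*} [NonUnitalCommRing U]
    (Rstar : U → U → U)
    (hapk : ∀ x y z : U, x * Rstar z y = y * Rstar z x) :
    ∀ x y z u : U, (Rstar x (z * y) - z * Rstar x y) * u = 0 := by
  intro x y z u
  rw [sub_mul, map_mul_mul_eq_of_mul_map_symm (fun a b => hapk a b x), sub_self]

/-- For an APK-compatible pair, `(R_x* R_z - R_z R_x*) y` lies in the annihilator
of `U` for all `x, y, z`. -/
theorem apk_commutator_in_annihilator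
    {U : Type*} [NonUnitalCommRing U] [Module ℂ U]
    [SMulCommClass ℂ U U] [IsScalarTower ℂ U U] [FiniteDimensional ℂ U]
    (H : U → U → ℂ)
    (Hadd : ∀ x x' y : U, H (x + x') y = H x y + H x' y)
    (Hsmul : ∀ (c : ℂ) (x y : U), H (c • x) y = c * H x y)
    (Hherm : ∀ x y : U, H x y = starRingEnd ℂ (H y x))
    (Hnd : ∀ x : U, (∀ y : U, H x y = 0) → x = 0)
    (Rstar : U → U → U)
    (hadj : ∀ z x y : U, H (Rstar z x) y = H x (z * y))
    (hapk : ∀ x y z : U, x * Rstar z y = y * Rstar z x) :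
    ∀ x y z u : U, (Rstar x (z * y) - z * Rstar x y) * u = 0 :=
  apk_commutator_in_annihilator_general Rstar hapk
end

section
/- Let (U, H) be an APK-compatible pair and let R_U* U denote the ℂ-span of all elements R_x* y with x, y ∈ U. Then R_U* U equals the H-orthogonal complement of ann(U), and R_U* U is an ideal of the associative algebra U. -/
/-!
Adjointness gives `H (R_x* y) b = H y (x b)`, so by nondegeneracy the `H`-orthogonal complement
of `R_U* U` is exactly `ann U`. A nondegenerate hermitian form on a finite-dimensional space
satisfies `W^⊥⊥ = W` (its Riesz map to the dual is conjugate-linear, hence `ℝ`-linear, and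
injective between spaces of the same real dimension, hence onto), so `R_U* U = (ann U)^⊥`.
For the ideal property, the APK identity `u (R_v* a) = a (R_v* u)` puts `R_v* a` in `ann U`
whenever `a` is, and then `H (v w) a = H w (R_v* a)` vanishes for `w ∈ R_U* U`.
-/

open Module

namespace LinearMap

theorem conj_injective_iff_surjective_of_finrank_eq_finrank {V W : Type*} [AddCommGroup V]
    [Module ℂ V] [AddCommGroup W] [Module ℂ W] [FiniteDimensional ℂ V] [FiniteDimensional ℂ W]
    (hdim : finrank ℂ V = finrank ℂ W) {f : V →ₗ⋆[ℂ] W} :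
    Function.Injective f ↔ Function.Surjective f :=
  let fℝ : V →ₗ[ℝ] W :=
    { toFun := f
      map_add' := f.map_add
      map_smul' := fun r x => by simpa using f.map_smulₛₗ (r : ℂ) x }
  injective_iff_surjective_of_finrank_eq_finrank (f := fℝ) <| by
    rw [finrank_real_of_complex, finrank_real_of_complex, hdim]

theorem IsRefl.separatingLeft_of_separatingRight {R R₁ M M₁ : Type*} [CommSemiring R]
    [CommSemiring R₁] [AddCommMonoid M] [Module R M] [AddCommMonoid M₁] [Module R₁ M₁]
    {I₁ I₂ : R₁ →+* R} {B : M₁ →ₛₗ[I₁] M₁ →ₛₗ[I₂] M} (hB : B.IsRefl) (h : B.SeparatingRight) :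
    B.SeparatingLeft :=
  fun x hx => h x fun y => hB x y (hx y)

variable {V : Type*} [AddCommGroup V] [Module ℂ V] [FiniteDimensional ℂ V]
  {B : V →ₗ⋆[ℂ] V →ₗ[ℂ] ℂ}

theorem SeparatingLeft.surjective (h : B.SeparatingLeft) : Function.Surjective B :=
  (conj_injective_iff_surjective_of_finrank_eq_finrank Subspace.dual_finrank_eq.symm).1 <|
    ker_eq_bot.1 (separatingLeft_iff_ker_eq_bot.1 h)

theorem IsSymm.orthogonalBilin_orthogonalBilin (hB : B.IsSymm) (h : B.SeparatingLeft)
    (W : Submodule ℂ V) : (W.orthogonalBilin B).orthogonalBilin B = W := by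
  refine le_antisymm (fun w hw => ?_) (W.le_orthogonalBilin_orthogonalBilin hB.isRefl)
  by_contra hwW
  obtain ⟨_, hbw, hbW⟩ := W.exists_dual_map_eq_bot_of_notMem hwW inferInstance
  obtain ⟨b, rfl⟩ := h.surjective ‹Dual ℂ V›
  have hb : b ∈ W.orthogonalBilin B := fun n hn =>
    hB.eq_iff.1 (mem_ker.1 (le_ker_iff_map.2 hbW hn))
  exact hbw (hw b hb)

end LinearMap

theorem Submodule.mem_orthogonalBilin_span_iff {R R₁ R₂ M M₁ M₂ : Type*} [CommSemiring R]
    [CommSemiring R₁] [CommSemiring R₂] [AddCommMonoid M] [Module R M] [AddCommMonoid M₁]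
    [Module R₁ M₁] [AddCommMonoid M₂] [Module R₂ M₂] {I₁ : R₁ →+* R} {I₂ : R₂ →+* R}
    {B : M₁ →ₛₗ[I₁] M₂ →ₛₗ[I₂] M} {s : Set M₁} {m : M₂} :
    m ∈ (span R₁ s).orthogonalBilin B ↔ ∀ n ∈ s, B n m = 0 := by
  refine ⟨fun h n hn => h n (subset_span hn), fun h n hn => ?_⟩
  induction hn using span_induction with
  | mem n hn => exact h n hn
  | zero => simp
  | add _ _ _ _ h₁ h₂ => simp [h₁, h₂]
  | smul _ _ _ h => simp [h]

section APK

variable {U : Type*} [NonUnitalCommRing U] [Module ℂ U]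

/-- The paper's `R_U* U`. -/
def rstarSpan (Rstar : U → U → U) : Submodule ℂ U :=
  Submodule.span ℂ {u : U | ∃ x y : U, u = Rstar x y}

variable {B : U →ₗ⋆[ℂ] U →ₗ[ℂ] ℂ} {Rstar : U → U → U}

theorem mem_orthogonalBilin_rstarSpan_iff (hB : B.IsSymm) (hsep : B.SeparatingLeft)
    (hadj : ∀ z x y : U, B y (Rstar z x) = B (z * y) x) {b : U} :
    b ∈ (rstarSpan Rstar).orthogonalBilin B ↔ ∀ v : U, b * v = 0 := by
  rw [rstarSpan, Submodule.mem_orthogonalBilin_span_iff]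
  constructor
  · intro hb v
    refine hsep _ fun y => ?_
    rw [mul_comm, ← hadj, hB.eq_iff]
    exact hb _ ⟨v, y, rfl⟩
  · rintro hb _ ⟨x, y, rfl⟩
    rw [hB.eq_iff, hadj, mul_comm, hb, map_zero, LinearMap.zero_apply]

variable [FiniteDimensional ℂ U]

theorem mem_rstarSpan_iff (hB : B.IsSymm) (hsep : B.SeparatingLeft)
    (hadj : ∀ z x y : U, B y (Rstar z x) = B (z * y) x) {w : U} :
    w ∈ rstarSpan Rstar ↔ ∀ a : U, (∀ v : U, a * v = 0) → B a w = 0 := by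
  conv_lhs => rw [← hB.orthogonalBilin_orthogonalBilin hsep (rstarSpan Rstar)]
  simp only [Submodule.mem_orthogonalBilin_iff, mem_orthogonalBilin_rstarSpan_iff hB hsep hadj]

theorem mul_mem_rstarSpan (hB : B.IsSymm) (hsep : B.SeparatingLeft)
    (hadj : ∀ z x y : U, B y (Rstar z x) = B (z * y) x)
    (hapk : ∀ x y z : U, x * Rstar z y = y * Rstar z x) {w : U} (hw : w ∈ rstarSpan Rstar)
    (v : U) : v * w ∈ rstarSpan Rstar := by
  rw [mem_rstarSpan_iff hB hsep hadj] at hw ⊢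
  intro a ha
  have hRa : ∀ u : U, Rstar v a * u = 0 := fun u => by rw [mul_comm, hapk, ha]
  rw [hB.eq_iff, ← hadj, hB.eq_iff]
  exact hw _ hRa

end APK

theorem apk_RstarU_eq_ann_orthogonal_and_ideal_general
    {U : Type*} [NonUnitalCommRing U] [Module ℂ U]
    [FiniteDimensional ℂ U]
    (H : U → U → ℂ)
    (Hadd : ∀ x x' y : U, H (x + x') y = H x y + H x' y)
    (Hsmul : ∀ (c : ℂ) (x y : U), H (c • x) y = c * H x y)
    (Hherm : ∀ x y : U, H x y = starRingEnd ℂ (H y x))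
    (Hnd : ∀ x : U, (∀ y : U, H x y = 0) → x = 0)
    (Rstar : U → U → U)
    (hadj : ∀ z x y : U, H (Rstar z x) y = H x (z * y))
    (hapk : ∀ x y z : U, x * Rstar z y = y * Rstar z x) :
    (∀ w : U, w ∈ Submodule.span ℂ {u : U | ∃ x y : U, u = Rstar x y} ↔
      ∀ a : U, (∀ v : U, a * v = 0) → H w a = 0) ∧
    (∀ w ∈ Submodule.span ℂ {u : U | ∃ x y : U, u = Rstar x y},
      ∀ v : U, v * w ∈ Submodule.span ℂ {u : U | ∃ x y : U, u = Rstar x y}) := by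
  -- `B y x = H x y` puts `H` in Mathlib's convention: conjugate-linear in the first argument.
  let B : U →ₗ⋆[ℂ] U →ₗ[ℂ] ℂ := LinearMap.mk₂'ₛₗ (starRingEnd ℂ) (RingHom.id ℂ) (fun y x => H x y)
    (fun y y' x => by rw [Hherm, Hadd, map_add, ← Hherm, ← Hherm])
    (fun c y x => by rw [Hherm, Hsmul, map_mul, ← Hherm, smul_eq_mul])
    (fun y x x' => Hadd x x' y) (fun c y x => Hsmul c x y)
  have hB : B.IsSymm := ⟨fun x y => (Hherm x y).symm⟩
  have hsep : B.SeparatingLeft := hB.isRefl.separatingLeft_of_separatingRight Hnd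
  exact ⟨fun w => mem_rstarSpan_iff hB hsep hadj,
    fun w hw v => mul_mem_rstarSpan hB hsep hadj hapk hw v⟩

/-- For an APK-compatible pair, the span `R_U* U` of all `R_x* y` equals the
`H`-orthogonal complement of the annihilator of `U`, and it is an ideal of the
associative algebra `U`. -/
theorem apk_RstarU_eq_ann_orthogonal_and_ideal
    {U : Type*} [NonUnitalCommRing U] [Module ℂ U]
    [SMulCommClass ℂ U U] [IsScalarTower ℂ U U] [FiniteDimensional ℂ U]
    (H : U → U → ℂ)
    (Hadd : ∀ x x' y : U, H (x + x') y = H x y + H x' y)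
    (Hsmul : ∀ (c : ℂ) (x y : U), H (c • x) y = c * H x y)
    (Hherm : ∀ x y : U, H x y = starRingEnd ℂ (H y x))
    (Hnd : ∀ x : U, (∀ y : U, H x y = 0) → x = 0)
    (Rstar : U → U → U)
    (hadj : ∀ z x y : U, H (Rstar z x) y = H x (z * y))
    (hapk : ∀ x y z : U, x * Rstar z y = y * Rstar z x) :
    (∀ w : U, w ∈ Submodule.span ℂ {u : U | ∃ x y : U, u = Rstar x y} ↔
      ∀ a : U, (∀ v : U, a * v = 0) → H w a = 0) ∧
    (∀ w ∈ Submodule.span ℂ {u : U | ∃ x y : U, u = Rstar x y},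
      ∀ v : U, v * w ∈ Submodule.span ℂ {u : U | ∃ x y : U, u = Rstar x y}) :=
  apk_RstarU_eq_ann_orthogonal_and_ideal_general H Hadd Hsmul Hherm Hnd Rstar hadj hapk
end

section
/- Let (U, H) be an APK-compatible pair with ann(U) = {0}. Then U = U² = R_U* U, where R_U* U is the span of all R_x* y. -/
/-!
The real part of the hermitian form `H` is a nondegenerate symmetric real bilinear form, so a
complex subspace whose `H`-orthogonal is zero is everything.
If `u` is orthogonal to every `R_x* y`, then `H (y, x u) = 0` for all `y`, so `u ∈ ann U = 0`;
hence `R_U* U = U`. If `u` is orthogonal to `U²`, then `H (R_x* u, y) = conj H (x y, u) = 0`,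
so `R_x* u = 0`, and the APK identity `u R_x* y = y R_x* u = 0` shows that `u` annihilates
`R_U* U = U`, whence `u = 0`.
-/

open Submodule

namespace LinearMap

variable {V : Type*} [AddCommGroup V] [Module ℂ V]

section OfHermitian

variable (H : V → V → ℂ) (Hadd : ∀ x x' y : V, H (x + x') y = H x y + H x' y)
  (Hsmul : ∀ (c : ℂ) (x y : V), H (c • x) y = c * H x y)
  (Hherm : ∀ x y : V, H x y = starRingEnd ℂ (H y x))

/-- Mathlib's sesquilinear forms are conjugate-linear in the first argument, hence the swap. -/
def sesqFormOfHermitian : V →ₗ⋆[ℂ] V →ₗ[ℂ] ℂ :=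
  mk₂'ₛₗ (starRingEnd ℂ) (RingHom.id ℂ) (fun x y => H y x)
    (fun x x' y => by simp only [Hherm y, Hadd, map_add])
    (fun c x y => by simp only [Hherm y, Hsmul, map_mul, smul_eq_mul])
    (fun x y y' => Hadd y y' x) (fun c x y => Hsmul c y x)

theorem isSymm_sesqFormOfHermitian : (sesqFormOfHermitian H Hadd Hsmul Hherm).IsSymm :=
  ⟨fun x y => (Hherm x y).symm⟩

end OfHermitian

variable (B : V →ₗ⋆[ℂ] V →ₗ[ℂ] ℂ)

def reBilin : LinearMap.BilinForm ℝ V :=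
  mk₂ ℝ (fun x y => (B x y).re)
    (fun x x' y => by simp)
    (fun c x y => by simp [← Complex.coe_smul])
    (fun x y y' => by simp)
    (fun c x y => by simp [← Complex.coe_smul])

variable {B}

theorem IsSymm.isRefl_reBilin (hB : B.IsSymm) : B.reBilin.IsRefl := fun x y h => by
  simpa [reBilin, ← hB.eq x y] using h

theorem forall_re_eq_zero_iff {W : Submodule ℂ V} {y : V} :
    (∀ x ∈ W, (B x y).re = 0) ↔ ∀ x ∈ W, B x y = 0 := by
  refine ⟨fun h x hx => Complex.ext (h x hx) ?_, fun h x hx => by simp [h x hx]⟩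
  simpa [Complex.mul_re] using h (Complex.I • x) (W.smul_mem _ hx)

theorem reBilin_orthogonal (W : Submodule ℂ V) :
    B.reBilin.orthogonal (W.restrictScalars ℝ) = (W.orthogonalBilin B).restrictScalars ℝ := by
  ext y
  exact forall_re_eq_zero_iff

theorem IsSymm.nondegenerate_reBilin (hB : B.IsSymm) (hB' : B.SeparatingRight) :
    B.reBilin.Nondegenerate := by
  refine hB.isRefl_reBilin.nondegenerate_iff_separatingRight.2 fun y hy => hB' y ?_
  simpa using (forall_re_eq_zero_iff (W := ⊤) (y := y)).1 (fun x _ => hy x)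

theorem IsSymm.eq_top_of_orthogonalBilin_eq_bot [FiniteDimensional ℂ V] (hB : B.IsSymm)
    (hB' : B.SeparatingRight) {W : Submodule ℂ V} (hW : W.orthogonalBilin B = ⊥) : W = ⊤ := by
  apply Submodule.restrictScalars_injective ℝ ℂ V
  rw [← BilinForm.orthogonal_orthogonal (hB.nondegenerate_reBilin hB') hB.isRefl_reBilin
    (W.restrictScalars ℝ), reBilin_orthogonal, hW, restrictScalars_bot, BilinForm.orthogonal_bot,
    restrictScalars_top]

end LinearMap

section APK

variable {U : Type*} [NonUnitalCommRing U] [Module ℂ U] {B : U →ₗ⋆[ℂ] U →ₗ[ℂ] ℂ}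
  {Rstar : U → U → U}

theorem eq_zero_of_forall_mul_eq_zero_of_span_eq_top [SMulCommClass ℂ U U]
    (hann : ∀ u : U, (∀ v : U, u * v = 0) → u = 0) {S : Set U} (hS : span ℂ S = ⊤) {u : U}
    (hu : ∀ s ∈ S, u * s = 0) : u = 0 := by
  refine hann u fun v => ?_
  have hv : v ∈ span ℂ S := hS ▸ mem_top
  induction hv using span_induction with
  | mem s hs => exact hu s hs
  | zero => exact mul_zero u
  | add v w _ _ hv hw => rw [mul_add, hv, hw, add_zero]
  | smul c v _ hv => rw [mul_smul_comm, hv, smul_zero]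

theorem mul_eq_zero_of_mem_orthogonalBilin_span_adjoint (hB : B.IsRefl) (hB' : B.SeparatingLeft)
    (hadj : ∀ z x y : U, B x (Rstar z y) = B (z * x) y) {u : U}
    (hu : u ∈ (span ℂ {w | ∃ x y : U, w = Rstar x y}).orthogonalBilin B) (x : U) :
    x * u = 0 :=
  hB' _ fun y => by
    rw [← hadj]
    exact hB _ _ (hu _ (subset_span ⟨x, y, rfl⟩))

theorem adjoint_eq_zero_of_mem_orthogonalBilin_span_mul (hB : B.SeparatingRight)
    (hadj : ∀ z x y : U, B x (Rstar z y) = B (z * x) y) {u : U}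
    (hu : u ∈ (span ℂ {w | ∃ x y : U, w = x * y}).orthogonalBilin B) (x : U) :
    Rstar x u = 0 :=
  hB _ fun y => by
    rw [hadj]
    exact hu _ (subset_span ⟨x, y, rfl⟩)

end APK

theorem apk_trivial_annihilator_eq_sq_general
    {U : Type*} [NonUnitalCommRing U] [Module ℂ U]
    [SMulCommClass ℂ U U] [FiniteDimensional ℂ U]
    (H : U → U → ℂ)
    (Hadd : ∀ x x' y : U, H (x + x') y = H x y + H x' y)
    (Hsmul : ∀ (c : ℂ) (x y : U), H (c • x) y = c * H x y)
    (Hherm : ∀ x y : U, H x y = starRingEnd ℂ (H y x))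
    (Hnd : ∀ x : U, (∀ y : U, H x y = 0) → x = 0)
    (Rstar : U → U → U)
    (hadj : ∀ z x y : U, H (Rstar z x) y = H x (z * y))
    (hapk : ∀ x y z : U, x * Rstar z y = y * Rstar z x)
    (hann : ∀ u : U, (∀ v : U, u * v = 0) → u = 0) :
    Submodule.span ℂ {w : U | ∃ x y : U, w = x * y} = ⊤ ∧
    Submodule.span ℂ {w : U | ∃ x y : U, w = Rstar x y} = ⊤ := by
  set B := LinearMap.sesqFormOfHermitian H Hadd Hsmul Hherm
  have hB : B.IsSymm := LinearMap.isSymm_sesqFormOfHermitian H Hadd Hsmul Hherm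
  have hBright : B.SeparatingRight := Hnd
  have hBleft : B.SeparatingLeft := fun x hx => hBright x fun y => hB.isRefl _ _ (hx y)
  have hadjB : ∀ z x y : U, B x (Rstar z y) = B (z * x) y := fun z x y => hadj z y x
  have hspan_adjoint : span ℂ {w | ∃ x y : U, w = Rstar x y} = ⊤ :=
    hB.eq_top_of_orthogonalBilin_eq_bot hBright <| (Submodule.eq_bot_iff _).2 fun u hu =>
      hann u fun v => mul_comm u v ▸
        mul_eq_zero_of_mem_orthogonalBilin_span_adjoint hB.isRefl hBleft hadjB hu v
  refine ⟨hB.eq_top_of_orthogonalBilin_eq_bot hBright <| (Submodule.eq_bot_iff _).2 fun u hu => ?_,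
    hspan_adjoint⟩
  refine eq_zero_of_forall_mul_eq_zero_of_span_eq_top hann hspan_adjoint ?_
  rintro _ ⟨z, y, rfl⟩
  rw [hapk, adjoint_eq_zero_of_mem_orthogonalBilin_span_mul hBright hadjB hu, mul_zero]

/-- For an APK-compatible pair with trivial annihilator, `U = U² = R_U* U`. -/
theorem apk_trivial_annihilator_eq_sq
    {U : Type*} [NonUnitalCommRing U] [Module ℂ U]
    [SMulCommClass ℂ U U] [IsScalarTower ℂ U U] [FiniteDimensional ℂ U]
    (H : U → U → ℂ)
    (Hadd : ∀ x x' y : U, H (x + x') y = H x y + H x' y)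
    (Hsmul : ∀ (c : ℂ) (x y : U), H (c • x) y = c * H x y)
    (Hherm : ∀ x y : U, H x y = starRingEnd ℂ (H y x))
    (Hnd : ∀ x : U, (∀ y : U, H x y = 0) → x = 0)
    (Rstar : U → U → U)
    (hadj : ∀ z x y : U, H (Rstar z x) y = H x (z * y))
    (hapk : ∀ x y z : U, x * Rstar z y = y * Rstar z x)
    (hann : ∀ u : U, (∀ v : U, u * v = 0) → u = 0) :
    Submodule.span ℂ {w : U | ∃ x y : U, w = x * y} = ⊤ ∧
    Submodule.span ℂ {w : U | ∃ x y : U, w = Rstar x y} = ⊤ :=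
  apk_trivial_annihilator_eq_sq_general H Hadd Hsmul Hherm Hnd Rstar hadj hapk hann
end

section
/- Let (A, B) be a real symmetric commutative associative algebra (B nondegenerate symmetric bilinear with B(ab,c) = B(a,bc)). Then ω((a,b),(a',b')) := B(a,b') - B(b,a') is a symplectic form on the Lie algebra aff(A), compatible with the abelian complex structure J(a,b) = (-b,a), i.e. ω(Jx,Jy) = ω(x,y); thus (aff(A), ω, J) is pseudo-Kähler. -/
/-!
Invariance of `B` together with commutativity makes `(a, b, c) ↦ B (a * b) c` symmetric in all
three arguments, so the six terms of the cyclic sum in the cocycle condition cancel in pairs.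
The other properties are direct computations.
-/

namespace Aff

variable {R A : Type*} [CommRing R] [NonUnitalCommRing A] [Module R A]

def bracket (p q : A × A) : A × A := (0, p.1 * q.2 - q.1 * p.2)

def form (B : A →ₗ[R] A →ₗ[R] R) (p q : A × A) : R := B p.1 q.2 - B p.2 q.1

def complexStructure (p : A × A) : A × A := (-p.2, p.1)

lemma apply_mul_apply_comm (B : A →ₗ[R] A →ₗ[R] R)
    (hB : ∀ a b c : A, B (a * b) c = B a (b * c)) (a b c : A) :
    B (a * b) c = B (c * b) a := by
  rw [mul_comm a, hB, mul_comm a, ← hB, mul_comm]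

lemma form_antisymm {B : A →ₗ[R] A →ₗ[R] R} (hB : ∀ a b : A, B a b = B b a) (p q : A × A) :
    form B p q = -form B q p := by
  simp only [form, hB p.1, hB p.2]
  ring

lemma form_bracket_cyclic {B : A →ₗ[R] A →ₗ[R] R}
    (hB : ∀ a b c : A, B (a * b) c = B a (b * c)) (p q r : A × A) :
    form B (bracket p q) r + form B (bracket q r) p + form B (bracket r p) q = 0 := by
  simp only [form, bracket, map_sub, map_zero, LinearMap.zero_apply, LinearMap.sub_apply]
  rw [apply_mul_apply_comm B hB r.1 q.2, apply_mul_apply_comm B hB r.1 p.2,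
    apply_mul_apply_comm B hB p.1 r.2]
  ring

lemma form_nondegenerate {B : A →ₗ[R] A →ₗ[R] R} (hB : ∀ a : A, (∀ b : A, B a b = 0) → a = 0)
    (p : A × A) (hp : ∀ q, form B p q = 0) : p = 0 := by
  refine Prod.ext (hB _ fun b ↦ ?_) (hB _ fun b ↦ ?_)
  · simpa [form] using hp (0, b)
  · simpa [form] using hp (b, 0)

lemma complexStructure_complexStructure (p : A × A) :
    complexStructure (complexStructure p) = -p := by
  simp [complexStructure, Prod.ext_iff]

lemma bracket_complexStructure (p q : A × A) :
    bracket (complexStructure p) (complexStructure q) = bracket p q := by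
  simp only [bracket, complexStructure, neg_mul, sub_neg_eq_add, Prod.mk.injEq, true_and]
  rw [mul_comm q.2, mul_comm q.1]
  abel

lemma form_complexStructure (B : A →ₗ[R] A →ₗ[R] R) (p q : A × A) :
    form B (complexStructure p) (complexStructure q) = form B p q := by
  simp only [form, complexStructure, map_neg, LinearMap.neg_apply]
  ring

end Aff

open Aff in
theorem aff_standard_pseudoKaehler_general
    {A : Type*} [NonUnitalCommRing A] [Module ℝ A]
    (B : A →ₗ[ℝ] A →ₗ[ℝ] ℝ)
    (hsymm : ∀ a b : A, B a b = B b a)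
    (hBnd : ∀ a : A, (∀ b : A, B a b = 0) → a = 0)
    (hBassoc : ∀ a b c : A, B (a * b) c = B a (b * c))
    (br : A × A → A × A → A × A)
    (hbr : ∀ p q, br p q = (0, p.1 * q.2 - q.1 * p.2))
    (ω : A × A → A × A → ℝ)
    (hω : ∀ p q, ω p q = B p.1 q.2 - B p.2 q.1)
    (J : A × A → A × A)
    (hJ : ∀ p : A × A, J p = (-p.2, p.1)) :
    (∀ p q, ω p q = -ω q p) ∧
    (∀ p q r, ω (br p q) r + ω (br q r) p + ω (br r p) q = 0) ∧
    (∀ p, (∀ q, ω p q = 0) → p = 0) ∧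
    (∀ p, J (J p) = -p) ∧
    (∀ p q, br (J p) (J q) = br p q) ∧
    (∀ p q, ω (J p) (J q) = ω p q) := by
  obtain rfl : br = bracket := funext₂ hbr
  obtain rfl : ω = form B := funext₂ hω
  obtain rfl : J = complexStructure := funext hJ
  exact ⟨form_antisymm hsymm, form_bracket_cyclic hBassoc, form_nondegenerate hBnd,
    complexStructure_complexStructure, bracket_complexStructure, form_complexStructure B⟩

/-- For a real symmetric commutative associative algebra `(A, B)`, the form
`ω((a,b),(a',b')) = B(a,b') - B(b,a')` is a symplectic form on `aff(A)` compatible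
with the abelian complex structure `J(a,b) = (-b,a)`, so `(aff(A), ω, J)` is
pseudo-Kähler. -/
theorem aff_standard_pseudoKaehler
    {A : Type*} [NonUnitalCommRing A] [Module ℝ A]
    [SMulCommClass ℝ A A] [IsScalarTower ℝ A A]
    (B : A →ₗ[ℝ] A →ₗ[ℝ] ℝ)
    (hsymm : ∀ a b : A, B a b = B b a)
    (hBnd : ∀ a : A, (∀ b : A, B a b = 0) → a = 0)
    (hBassoc : ∀ a b c : A, B (a * b) c = B a (b * c))
    (br : A × A → A × A → A × A)
    (hbr : ∀ p q, br p q = (0, p.1 * q.2 - q.1 * p.2))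
    (ω : A × A → A × A → ℝ)
    (hω : ∀ p q, ω p q = B p.1 q.2 - B p.2 q.1)
    (J : A × A → A × A)
    (hJ : ∀ p : A × A, J p = (-p.2, p.1)) :
    (∀ p q, ω p q = -ω q p) ∧
    (∀ p q r, ω (br p q) r + ω (br q r) p + ω (br r p) q = 0) ∧
    (∀ p, (∀ q, ω p q = 0) → p = 0) ∧
    (∀ p, J (J p) = -p) ∧
    (∀ p q, br (J p) (J q) = br p q) ∧
    (∀ p q, ω (J p) (J q) = ω p q) :=
  aff_standard_pseudoKaehler_general B hsymm hBnd hBassoc br hbr ω hω J hJ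
end

section
/- Let (A, B) be a real symmetric commutative associative algebra and equip aff(A) with its standard pseudo-Kähler structure. The left-symmetric product defined by ω via ω(x·y, z) = -ω(y, [x,z]) is given by (a,b)·(a',b') = -(aa', ba'), and this product is associative. -/
/-!
On `aff(A) = A × A` the form `ω` is nondegenerate as soon as `B` is, so the left-symmetric
product is determined by the identity `ω(x·y, z) = -ω(y, [x,z])`. Invariance and symmetry of `B`
show that `(a,b)·(a',b') = -(aa', ba')` satisfies this identity, hence it is the product; its
associativity is then the associativity of `A`.
-/

namespace Aff

variable {R A : Type*} [CommRing R] [NonUnitalCommRing A] [Module R A]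

def product (p q : A × A) : A × A := (-(p.1 * q.1), -(p.2 * q.1))

theorem product_assoc (p q r : A × A) : product (product p q) r = product p (product q r) := by
  simp only [product, neg_mul, mul_neg, neg_neg, mul_assoc]

theorem eq_of_form_eq {B : A →ₗ[R] A →ₗ[R] R} (hB : Function.Injective B) {x y : A × A}
    (h : ∀ r, form B x r = form B y r) : x = y := by
  have h₁ : B x.1 = B y.1 := LinearMap.ext fun b => by simpa [form] using h (0, b)
  have h₂ : B x.2 = B y.2 := LinearMap.ext fun b => by simpa [form] using h (b, 0)
  exact Prod.ext (hB h₁) (hB h₂)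

theorem form_product {B : A →ₗ[R] A →ₗ[R] R} (hsymm : ∀ a b, B a b = B b a)
    (hassoc : ∀ a b c, B (a * b) c = B a (b * c)) (p q r : A × A) :
    form B (product p q) r = -form B q (bracket p r) := by
  have e₁ : B q.1 (p.1 * r.2) = B (p.1 * q.1) r.2 := by rw [← hassoc, mul_comm]
  have e₂ : B q.1 (r.1 * p.2) = B (p.2 * q.1) r.1 := by rw [← hassoc, hsymm, ← hassoc]
  simp only [form, product, bracket, map_neg, map_sub, map_zero, LinearMap.neg_apply, e₁, e₂]
  ring

end Aff

theorem aff_leftSymmetric_product_formula_and_assoc_general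
    {A : Type*} [NonUnitalCommRing A] [Module ℝ A]
    (B : A →ₗ[ℝ] A →ₗ[ℝ] ℝ)
    (hsymm : ∀ a b : A, B a b = B b a)
    (hBnd : ∀ a : A, (∀ b : A, B a b = 0) → a = 0)
    (hBassoc : ∀ a b c : A, B (a * b) c = B a (b * c))
    (br : A × A → A × A → A × A)
    (hbr : ∀ p q, br p q = (0, p.1 * q.2 - q.1 * p.2))
    (ω : A × A → A × A → ℝ)
    (hω : ∀ p q, ω p q = B p.1 q.2 - B p.2 q.1)
    (m : A × A → A × A → A × A)
    (hm : ∀ p q r, ω (m p q) r = -ω q (br p r)) :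
    (∀ p q : A × A, m p q = (-(p.1 * q.1), -(p.2 * q.1))) ∧
    (∀ p q r : A × A, m (m p q) r = m p (m q r)) := by
  obtain rfl : br = Aff.bracket := funext₂ hbr
  obtain rfl : ω = Aff.form B := funext₂ hω
  have hB : Function.Injective B := LinearMap.ker_eq_bot.mp <|
    LinearMap.ker_eq_bot'.mpr fun a ha => hBnd a (LinearMap.ext_iff.mp ha)
  have hm_eq : m = Aff.product := funext₂ fun p q => Aff.eq_of_form_eq hB fun r => by
    rw [hm, Aff.form_product hsymm hBassoc]
  subst hm_eq
  exact ⟨fun _ _ => rfl, Aff.product_assoc⟩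

/-- For `aff(A)` with its standard pseudo-Kähler structure, the left-symmetric
product defined by `ω` via `ω(x·y, z) = -ω(y, [x,z])` is
`(a,b)·(a',b') = -(aa', ba')`, and this product is associative. -/
theorem aff_leftSymmetric_product_formula_and_assoc
    {A : Type*} [NonUnitalCommRing A] [Module ℝ A]
    [SMulCommClass ℝ A A] [IsScalarTower ℝ A A]
    (B : A →ₗ[ℝ] A →ₗ[ℝ] ℝ)
    (hsymm : ∀ a b : A, B a b = B b a)
    (hBnd : ∀ a : A, (∀ b : A, B a b = 0) → a = 0)
    (hBassoc : ∀ a b c : A, B (a * b) c = B a (b * c))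
    (br : A × A → A × A → A × A)
    (hbr : ∀ p q, br p q = (0, p.1 * q.2 - q.1 * p.2))
    (ω : A × A → A × A → ℝ)
    (hω : ∀ p q, ω p q = B p.1 q.2 - B p.2 q.1)
    (m : A × A → A × A → A × A)
    (hm : ∀ p q r, ω (m p q) r = -ω q (br p r)) :
    (∀ p q : A × A, m p q = (-(p.1 * q.1), -(p.2 * q.1))) ∧
    (∀ p q r : A × A, m (m p q) r = m p (m q r)) :=
  aff_leftSymmetric_product_formula_and_assoc_general B hsymm hBnd hBassoc br hbr ω hω m hm
end

section
/- Let (U, H) be an APK-compatible pair and x ∈ U. For each integer k ≥ 2, the operator (R_x + R_x*)^k is a ℂ-linear combination of R_x^k, (R_x*)^k, and the operators R_x^r (R_x*)^{k-r} and (R_x*)^{k-r} R_x^r for 1 ≤ r ≤ k-1. In particular, if U is nilpotent with U^n = 0, then (R_x + R_x*)^{2n} = 0. -/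
/-- `prodSeq f n` is the product `f 0 * f 1 * ⋯ * f n` of `n + 1` elements. -/
def prodSeq {U : Type*} [Mul U] (f : ℕ → U) : ℕ → U
  | 0 => f 0
  | n + 1 => prodSeq f n * f (n + 1)

set_option linter.unusedSectionVars false
section APKAux
variable {U : Type*} [NonUnitalCommRing U] [Module ℂ U]
  [SMulCommClass ℂ U U] [IsScalarTower ℂ U U]

theorem apk_lemA (Rstar : U → U → U)
    (hapk : ∀ x y z : U, x * Rstar z y = y * Rstar z x) (x : U) :
    ∀ (b : ℕ) (y : U), x * (Rstar x)^[b] y = (Rstar x)^[b] x * y := by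
  intro b
  induction b with
  | zero => intro y; simp
  | succ b ih =>
    intro y
    rw [Function.iterate_succ_apply (Rstar x) b y, ih (Rstar x y), hapk _ y x,
      ← Function.iterate_succ_apply' (Rstar x) b x, mul_comm]

theorem apk_mulRcomm (x : U) :
    ∀ (a : ℕ) (v w : U), v * (fun z => x * z)^[a] w = (fun z => x * z)^[a] (v * w) := by
  intro a
  induction a with
  | zero => intro v w; simp
  | succ a ih =>
    intro v w
    rw [Function.iterate_succ_apply' (fun z => x * z) a w,
      Function.iterate_succ_apply' (fun z => x * z) a (v * w)]
    show v * (x * _) = x * _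
    rw [mul_left_comm, ih]

theorem apk_lemI (Rstar : U → U → U)
    (hapk : ∀ x y z : U, x * Rstar z y = y * Rstar z x) (x : U) :
    ∀ (a b : ℕ) (u : U),
      x * (Rstar x)^[b] ((fun z => x * z)^[a] u) =
        (fun z => x * z)^[a + 1] ((Rstar x)^[b] u) := by
  intro a b u
  rw [apk_lemA Rstar hapk x b, apk_mulRcomm, ← apk_lemA Rstar hapk x b,
    Function.iterate_succ_apply (fun z => x * z) a ((Rstar x)^[b] u)]

end APKAux

section Adj
variable {U : Type*} [NonUnitalCommRing U] [Module ℂ U]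
  [SMulCommClass ℂ U U] [IsScalarTower ℂ U U]
  (H : U → U → ℂ)
  (Hadd : ∀ x x' y : U, H (x + x') y = H x y + H x' y)
  (Hsmul : ∀ (c : ℂ) (x y : U), H (c • x) y = c * H x y)
  (Hherm : ∀ x y : U, H x y = starRingEnd ℂ (H y x))
  (Hnd : ∀ x : U, (∀ y : U, H x y = 0) → x = 0)
  (Rstar : U → U → U)
  (hadj : ∀ z x y : U, H (Rstar z x) y = H x (z * y))

include Hsmul in
theorem apk_Hzero : ∀ y : U, H 0 y = 0 := by
  intro y
  have := Hsmul 0 0 y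
  simpa using this

include Hadd Hsmul in
theorem apk_Hsub : ∀ p q y : U, H (p - q) y = H p y - H q y := by
  intro p q y
  have h1 : p - q = p + (-1 : ℂ) • q := by rw [neg_one_smul, sub_eq_add_neg]
  rw [h1, Hadd, Hsmul]
  ring

include hadj in
theorem apk_adjSR_iter (x : U) :
    ∀ (m : ℕ) (u v : U), H ((Rstar x)^[m] u) v = H u ((fun z => x * z)^[m] v) := by
  intro m
  induction m with
  | zero => intro u v; simp
  | succ m ih =>
    intro u v
    rw [Function.iterate_succ_apply' (Rstar x) m u, hadj, ih]
    simp only [Function.iterate_succ_apply]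

include Hherm hadj in
theorem apk_adjRS_iter (x : U) :
    ∀ (m : ℕ) (u v : U), H ((fun z => x * z)^[m] u) v = H u ((Rstar x)^[m] v) := by
  intro m u v
  rw [Hherm, ← apk_adjSR_iter H Rstar hadj x m v u, ← Hherm]

include Hherm hadj in
theorem apk_adjRS (x u v : U) : H (x * u) v = H u (Rstar x v) := by
  rw [Hherm, ← hadj x v u, ← Hherm]

include Hadd Hsmul Hherm Hnd hadj in
theorem apk_ruleB (x : U)
    (hapk : ∀ x y z : U, x * Rstar z y = y * Rstar z x) :
    ∀ (a b : ℕ) (v : U),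
      (Rstar x)^[a] ((fun z => x * z)^[b] (Rstar x v)) =
        (fun z => x * z)^[b] ((Rstar x)^[a + 1] v) := by
  intro a b v
  have key : ∀ u : U,
      H u ((Rstar x)^[a] ((fun z => x * z)^[b] (Rstar x v))) =
        H u ((fun z => x * z)^[b] ((Rstar x)^[a + 1] v)) := by
    intro u
    rw [← apk_adjRS_iter H Hherm Rstar hadj x a u ((fun z => x * z)^[b] (Rstar x v)),
      ← apk_adjSR_iter H Rstar hadj x b ((fun z => x * z)^[a] u) (Rstar x v),
      ← apk_adjRS H Hherm Rstar hadj x ((Rstar x)^[b] ((fun z => x * z)^[a] u)) v,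
      ← apk_adjSR_iter H Rstar hadj x b u ((Rstar x)^[a + 1] v),
      ← apk_adjRS_iter H Hherm Rstar hadj x (a + 1) ((Rstar x)^[b] u) v,
      apk_lemI Rstar hapk x a b u]
  have hz : ∀ y : U,
      H ((Rstar x)^[a] ((fun z => x * z)^[b] (Rstar x v)) -
        (fun z => x * z)^[b] ((Rstar x)^[a + 1] v)) y = 0 := by
    intro y
    rw [apk_Hsub H Hadd Hsmul, Hherm, key y, ← Hherm, sub_self]
  have h0 := Hnd _ hz
  rwa [sub_eq_zero] at h0


include Hadd Hsmul Hherm Hnd hadj in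
theorem apk_Sadd (x u v : U) : Rstar x (u + v) = Rstar x u + Rstar x v := by
  have hz : ∀ y : U, H (Rstar x (u + v) - (Rstar x u + Rstar x v)) y = 0 := by
    intro y
    rw [apk_Hsub H Hadd Hsmul, hadj x (u + v) y, Hadd u v (x * y),
      Hadd (Rstar x u) (Rstar x v) y, hadj x u y, hadj x v y]
    ring
  have h0 := Hnd _ hz
  rwa [sub_eq_zero] at h0

include Hadd Hsmul Hherm Hnd hadj in
theorem apk_Ssmul (x : U) (e : ℂ) (u : U) : Rstar x (e • u) = e • Rstar x u := by
  have hz : ∀ y : U, H (Rstar x (e • u) - e • Rstar x u) y = 0 := by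
    intro y
    rw [apk_Hsub H Hadd Hsmul, hadj x (e • u) y, Hsmul e u (x * y),
      Hsmul e (Rstar x u) y, hadj x u y]
    ring
  have h0 := Hnd _ hz
  rwa [sub_eq_zero] at h0

include Hadd Hsmul Hherm Hnd hadj in
theorem apk_S0 (x : U) : Rstar x 0 = 0 := by
  have h := apk_Ssmul H Hadd Hsmul Hherm Hnd Rstar hadj x 0 0
  simpa using h

include Hadd Hsmul Hherm Hnd hadj in
theorem apk_gA (x : U) (hapk : ∀ x y z : U, x * Rstar z y = y * Rstar z x) :
    ∀ (r m : ℕ) (y : U),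
      Rstar x ((fun z => x * z)^[r] ((Rstar x)^[m + 1] y)) =
        (fun z => x * z)^[r] ((Rstar x)^[m + 2] y) := by
  intro r m y
  have h := apk_ruleB H Hadd Hsmul Hherm Hnd Rstar hadj x hapk 1 r ((Rstar x)^[m] y)
  have h1 : Rstar x ((Rstar x)^[m] y) = (Rstar x)^[m + 1] y :=
    (Function.iterate_succ_apply' (Rstar x) m y).symm
  have h2 : (Rstar x)^[1 + 1] ((Rstar x)^[m] y) = (Rstar x)^[m + 2] y := by
    rw [← Function.iterate_add_apply]
    congr 1
    omega
  rw [h1, h2, Function.iterate_one] at h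
  exact h

end Adj
section Main
variable {U : Type*} [NonUnitalCommRing U] [Module ℂ U]
  [SMulCommClass ℂ U U] [IsScalarTower ℂ U U]
  (H : U → U → ℂ)
  (Hadd : ∀ x x' y : U, H (x + x') y = H x y + H x' y)
  (Hsmul : ∀ (c : ℂ) (x y : U), H (c • x) y = c * H x y)
  (Hherm : ∀ x y : U, H x y = starRingEnd ℂ (H y x))
  (Hnd : ∀ x : U, (∀ y : U, H x y = 0) → x = 0)
  (Rstar : U → U → U)
  (hadj : ∀ z x y : U, H (Rstar z x) y = H x (z * y))

include Hadd Hsmul Hherm Hnd hadj in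
theorem apk_main (x : U) (hapk : ∀ x y z : U, x * Rstar z y = y * Rstar z x) :
    ∀ k : ℕ, ∃ c d : ℕ → ℂ, ∀ y : U,
      (fun z => x * z + Rstar x z)^[k + 1] y =
        ∑ r ∈ Finset.range (k + 2),
          (c r • (fun z => x * z)^[r] ((Rstar x)^[k + 1 - r] y) +
            d r • (Rstar x)^[k + 1 - r] ((fun z => x * z)^[r] y)) := by
  have Ssum : ∀ (t : Finset ℕ) (f : ℕ → U),
      Rstar x (∑ r ∈ t, f r) = ∑ r ∈ t, Rstar x (f r) := by
    intro t f
    exact map_sum (AddMonoidHom.mk' (Rstar x)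
      (apk_Sadd H Hadd Hsmul Hherm Hnd Rstar hadj x)) f t
  intro k
  induction k with
  | zero =>
    refine ⟨fun _ => 1, fun _ => 0, fun y => ?_⟩
    simp [Finset.sum_range_succ]
    exact add_comm _ _
  | succ k ih =>
    obtain ⟨c, d, hc⟩ := ih
    refine ⟨fun s => (if s = 0 then 0 else c (s - 1) + d (s - 1)) +
        (if s < k + 1 then c s else 0),
      fun s => (if s < k + 2 then d s else 0) + (if s = k + 1 then c (k + 1) else 0),
      fun y => ?_⟩
    have hT : (fun z => x * z + Rstar x z)^[k + 1 + 1] y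
        = x * ((fun z => x * z + Rstar x z)^[k + 1] y) +
          Rstar x ((fun z => x * z + Rstar x z)^[k + 1] y) :=
      Function.iterate_succ_apply' _ _ _
    rw [hT, hc y]
    -- the x * (sum) part
    have hmul : x * (∑ r ∈ Finset.range (k + 2),
          (c r • (fun z => x * z)^[r] ((Rstar x)^[k + 1 - r] y) +
            d r • (Rstar x)^[k + 1 - r] ((fun z => x * z)^[r] y)))
        = ∑ r ∈ Finset.range (k + 2),
            (c r + d r) • (fun z => x * z)^[r + 1] ((Rstar x)^[k + 1 - r] y) := by
      rw [Finset.mul_sum]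
      refine Finset.sum_congr rfl fun r hr => ?_
      rw [mul_add, mul_smul_comm, mul_smul_comm,
        show x * (fun z => x * z)^[r] ((Rstar x)^[k + 1 - r] y)
            = (fun z => x * z)^[r + 1] ((Rstar x)^[k + 1 - r] y) from
          (Function.iterate_succ_apply' _ _ _).symm,
        apk_lemI Rstar hapk x r (k + 1 - r) y, ← add_smul]
    -- the Rstar x (sum) part
    have hstar : Rstar x (∑ r ∈ Finset.range (k + 2),
          (c r • (fun z => x * z)^[r] ((Rstar x)^[k + 1 - r] y) +
            d r • (Rstar x)^[k + 1 - r] ((fun z => x * z)^[r] y)))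
        = (∑ r ∈ Finset.range (k + 1),
            c r • (fun z => x * z)^[r] ((Rstar x)^[k + 2 - r] y)) +
          c (k + 1) • (Rstar x)^[1] ((fun z => x * z)^[k + 1] y) +
          ∑ r ∈ Finset.range (k + 2),
            d r • (Rstar x)^[k + 2 - r] ((fun z => x * z)^[r] y) := by
      rw [Ssum]
      have hterm : ∀ r ∈ Finset.range (k + 2),
          Rstar x (c r • (fun z => x * z)^[r] ((Rstar x)^[k + 1 - r] y) +
            d r • (Rstar x)^[k + 1 - r] ((fun z => x * z)^[r] y))
          = c r • Rstar x ((fun z => x * z)^[r] ((Rstar x)^[k + 1 - r] y)) +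
            d r • (Rstar x)^[k + 2 - r] ((fun z => x * z)^[r] y) := by
        intro r hr
        have h3 : k + 1 - r + 1 = k + 2 - r := by
          have := Finset.mem_range.mp hr
          omega
        rw [apk_Sadd H Hadd Hsmul Hherm Hnd Rstar hadj,
          apk_Ssmul H Hadd Hsmul Hherm Hnd Rstar hadj,
          apk_Ssmul H Hadd Hsmul Hherm Hnd Rstar hadj,
          ← Function.iterate_succ_apply' (Rstar x) (k + 1 - r), Nat.succ_eq_add_one, h3]
      rw [Finset.sum_congr rfl hterm, Finset.sum_add_distrib]
      congr 1
      rw [Finset.sum_range_succ]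
      congr 1
      · refine Finset.sum_congr rfl fun r hr => ?_
        have hrk := Finset.mem_range.mp hr
        have h1 : k + 1 - r = (k - r) + 1 := by omega
        rw [h1, apk_gA H Hadd Hsmul Hherm Hnd Rstar hadj x hapk r (k - r) y]
        have h2 : k - r + 2 = k + 2 - r := by omega
        rw [h2]
      · rw [Nat.sub_self]
        rfl
    rw [hmul, hstar]
    -- now massage the target sum
    have hsplit : ∑ s ∈ Finset.range (k + 3),
        (((if s = 0 then (0 : ℂ) else c (s - 1) + d (s - 1)) +
            (if s < k + 1 then c s else 0)) •
              (fun z => x * z)^[s] ((Rstar x)^[k + 1 + 1 - s] y) +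
          ((if s < k + 2 then d s else 0) + (if s = k + 1 then c (k + 1) else 0)) •
            (Rstar x)^[k + 1 + 1 - s] ((fun z => x * z)^[s] y))
        = (∑ r ∈ Finset.range (k + 2),
            (c r + d r) • (fun z => x * z)^[r + 1] ((Rstar x)^[k + 1 - r] y)) +
          (∑ r ∈ Finset.range (k + 1),
            c r • (fun z => x * z)^[r] ((Rstar x)^[k + 2 - r] y)) +
          (∑ r ∈ Finset.range (k + 2),
            d r • (Rstar x)^[k + 2 - r] ((fun z => x * z)^[r] y)) +
          c (k + 1) • (Rstar x)^[1] ((fun z => x * z)^[k + 1] y) := by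
      have E2 : ∀ s : ℕ, k + 1 + 1 - s = k + 2 - s := fun s => by omega
      simp only [add_smul, E2]
      rw [Finset.sum_add_distrib, Finset.sum_add_distrib, Finset.sum_add_distrib]
      have hA1 : ∑ s ∈ Finset.range (k + 3),
          (if s = 0 then (0:ℂ) else c (s - 1) + d (s - 1)) •
              (fun z => x * z)^[s] ((Rstar x)^[k + 2 - s] y)
          = ∑ s ∈ Finset.range (k + 2),
              (c s • (fun z => x * z)^[s + 1] ((Rstar x)^[k + 1 - s] y) +
                d s • (fun z => x * z)^[s + 1] ((Rstar x)^[k + 1 - s] y)) := by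
        rw [Finset.sum_range_succ']
        have E3 : ∀ s : ℕ, k + 2 - (s + 1) = k + 1 - s := fun s => by omega
        simp [E3, add_smul]
      have hA2 : ∑ s ∈ Finset.range (k + 3),
          (if s < k + 1 then c s else (0:ℂ)) •
              (fun z => x * z)^[s] ((Rstar x)^[k + 2 - s] y)
          = ∑ s ∈ Finset.range (k + 1),
              c s • (fun z => x * z)^[s] ((Rstar x)^[k + 2 - s] y) := by
        rw [Finset.sum_range_succ, Finset.sum_range_succ,
          if_neg (by omega : ¬ (k + 2 < k + 1)), if_neg (by omega : ¬ (k + 1 < k + 1))]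
        simp only [zero_smul, add_zero]
        refine Finset.sum_congr rfl fun s hs => ?_
        rw [if_pos (Finset.mem_range.mp hs)]
      have hB1 : ∑ s ∈ Finset.range (k + 3),
          (if s < k + 2 then d s else (0:ℂ)) •
              (Rstar x)^[k + 2 - s] ((fun z => x * z)^[s] y)
          = ∑ s ∈ Finset.range (k + 2),
              d s • (Rstar x)^[k + 2 - s] ((fun z => x * z)^[s] y) := by
        rw [Finset.sum_range_succ, if_neg (by omega : ¬ (k + 2 < k + 2))]
        simp only [zero_smul, add_zero]
        refine Finset.sum_congr rfl fun s hs => ?_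
        rw [if_pos (Finset.mem_range.mp hs)]
      have hB2 : ∑ s ∈ Finset.range (k + 3),
          (if s = k + 1 then c (k + 1) else (0:ℂ)) •
              (Rstar x)^[k + 2 - s] ((fun z => x * z)^[s] y)
          = c (k + 1) • (Rstar x)^[1] ((fun z => x * z)^[k + 1] y) := by
        rw [Finset.sum_eq_single_of_mem (k + 1) (Finset.mem_range.mpr (by omega))
          (fun b _ hne => by rw [if_neg hne, zero_smul]),
          if_pos rfl, show k + 2 - (k + 1) = 1 from by omega]
      rw [hA1, hA2, hB1, hB2]
      abel
    rw [hsplit]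
    abel

end Main

/-- For an APK-compatible pair and `x ∈ U`, each power `(R_x + R_x*)^k` (`k ≥ 2`)
is a linear combination of `R_x^k`, `(R_x*)^k`, `R_x^r (R_x*)^{k-r}` and
`(R_x*)^{k-r} R_x^r` for `1 ≤ r ≤ k - 1`.  In particular, if `U^n = 0` then
`(R_x + R_x*)^{2n} = 0`. -/
theorem apk_power_of_Rx_add_Rxstar
    {U : Type*} [NonUnitalCommRing U] [Module ℂ U]
    [SMulCommClass ℂ U U] [IsScalarTower ℂ U U] [FiniteDimensional ℂ U]
    (H : U → U → ℂ)
    (Hadd : ∀ x x' y : U, H (x + x') y = H x y + H x' y)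
    (Hsmul : ∀ (c : ℂ) (x y : U), H (c • x) y = c * H x y)
    (Hherm : ∀ x y : U, H x y = starRingEnd ℂ (H y x))
    (Hnd : ∀ x : U, (∀ y : U, H x y = 0) → x = 0)
    (Rstar : U → U → U)
    (hadj : ∀ z x y : U, H (Rstar z x) y = H x (z * y))
    (hapk : ∀ x y z : U, x * Rstar z y = y * Rstar z x)
    (hcons : ∀ x y z : U, x * Rstar y (x * z) = x * (x * Rstar y z)) :
    (∀ (x : U) (k : ℕ), 2 ≤ k → ∃ a b : ℂ, ∃ c d : ℕ → ℂ, ∀ y : U,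
      (fun z => x * z + Rstar x z)^[k] y =
        a • (fun z => x * z)^[k] y + b • (Rstar x)^[k] y +
          ∑ r ∈ Finset.Ico 1 k,
            (c r • (fun z => x * z)^[r] ((Rstar x)^[k - r] y) +
              d r • (Rstar x)^[k - r] ((fun z => x * z)^[r] y))) ∧
    (∀ n : ℕ, 1 ≤ n → (∀ f : ℕ → U, prodSeq f (n - 1) = 0) →
      ∀ x y : U, (fun z => x * z + Rstar x z)^[2 * n] y = 0) := by

  have part1 : ∀ (x : U) (k : ℕ), 2 ≤ k → ∃ a b : ℂ, ∃ c d : ℕ → ℂ, ∀ y : U,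
      (fun z => x * z + Rstar x z)^[k] y =
        a • (fun z => x * z)^[k] y + b • (Rstar x)^[k] y +
          ∑ r ∈ Finset.Ico 1 k,
            (c r • (fun z => x * z)^[r] ((Rstar x)^[k - r] y) +
              d r • (Rstar x)^[k - r] ((fun z => x * z)^[r] y)) := by
    intro x k hk
    obtain ⟨c, d, hc⟩ := apk_main H Hadd Hsmul Hherm Hnd Rstar hadj x hapk (k - 1)
    have hc' : ∀ y : U,
        (fun z => x * z + Rstar x z)^[k] y =
          ∑ r ∈ Finset.range (k + 1),
            (c r • (fun z => x * z)^[r] ((Rstar x)^[k - r] y) +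
              d r • (Rstar x)^[k - r] ((fun z => x * z)^[r] y)) := by
      intro y
      have h := hc y
      rw [show k - 1 + 1 = k from by omega, show k - 1 + 2 = k + 1 from by omega] at h
      exact h
    refine ⟨c k + d k, c 0 + d 0, c, d, fun y => ?_⟩
    rw [hc' y, Finset.sum_range_succ, Finset.range_eq_Ico,
      Finset.sum_eq_sum_Ico_succ_bot (by omega : 0 < k), Nat.sub_self, Nat.sub_zero]
    simp only [Function.iterate_zero_apply, Nat.zero_add, zero_add]
    rw [add_smul, add_smul]
    abel
  refine ⟨part1, ?_⟩
  intro n hn hnil x y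
  have R0 : ∀ m : ℕ, (fun z => x * z)^[m] (0 : U) = 0 := by
    intro m
    induction m with
    | zero => rfl
    | succ m ih =>
      rw [Function.iterate_succ_apply', ih]
      exact mul_zero x
  have prodR : ∀ (m : ℕ) (w : U),
      (fun z => x * z)^[m + 1] w = prodSeq (fun _ => x) m * w := by
    intro m
    induction m with
    | zero => intro w; rfl
    | succ m ih =>
      intro w
      rw [Function.iterate_succ_apply' (fun z => x * z) (m + 1) w]
      show x * ((fun z => x * z)^[m + 1] w) = _
      rw [ih w, show prodSeq (fun _ => x) (m + 1) = prodSeq (fun _ => x) m * x from rfl,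
        mul_left_comm, mul_assoc]
  have Rz : ∀ (m : ℕ) (w : U), n ≤ m → (fun z => x * z)^[m] w = 0 := by
    intro m w hm
    have h1 : (fun z => x * z)^[n] w = 0 := by
      obtain ⟨j, hj⟩ : ∃ j, n = j + 1 := ⟨n - 1, by omega⟩
      have h2 := hnil (fun _ => x)
      rw [show n - 1 = j from by omega] at h2
      rw [hj, prodR j w, h2, zero_mul]
    have h3 : (fun z => x * z)^[m] w
        = (fun z => x * z)^[m - n] ((fun z => x * z)^[n] w) := by
      rw [← Function.iterate_add_apply]
      congr 1
      omega
    rw [h3, h1, R0]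
  have S00 : Rstar x 0 = 0 := apk_S0 H Hadd Hsmul Hherm Hnd Rstar hadj x
  have Sit0 : ∀ m : ℕ, (Rstar x)^[m] (0 : U) = 0 := by
    intro m
    induction m with
    | zero => rfl
    | succ m ih => rw [Function.iterate_succ_apply', ih, S00]
  have Sz : ∀ (m : ℕ) (w : U), n ≤ m → (Rstar x)^[m] w = 0 := by
    intro m w hm
    have hn0 : (Rstar x)^[n] w = 0 := by
      apply Hnd
      intro u
      rw [apk_adjSR_iter H Rstar hadj x n w u, Rz n u (le_refl n), Hherm,
        apk_Hzero H Hsmul, map_zero]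
    have h3 : (Rstar x)^[m] w = (Rstar x)^[m - n] ((Rstar x)^[n] w) := by
      rw [← Function.iterate_add_apply]
      congr 1
      omega
    rw [h3, hn0, Sit0]
  obtain ⟨a, b, c, d, hrep⟩ := part1 x (2 * n) (by omega)
  rw [hrep y, Rz (2 * n) y (by omega), Sz (2 * n) y (by omega)]
  have hsum : ∑ r ∈ Finset.Ico 1 (2 * n),
      (c r • (fun z => x * z)^[r] ((Rstar x)^[2 * n - r] y) +
        d r • (Rstar x)^[2 * n - r] ((fun z => x * z)^[r] y)) = 0 := by
    refine Finset.sum_eq_zero fun r hr => ?_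
    rcases le_or_gt n r with h | h
    · rw [Rz r ((Rstar x)^[2 * n - r] y) h, Rz r y h, Sit0, smul_zero, smul_zero, add_zero]
    · rw [Sz (2 * n - r) y (by omega),
        Sz (2 * n - r) ((fun z => x * z)^[r] y) (by omega), R0,
        smul_zero, smul_zero, add_zero]
  rw [hsum, smul_zero, smul_zero, add_zero, add_zero]
end

section
/- Let (U, H) be an APK-compatible pair with associated pseudo-Kähler Lie algebra g_U. The Levi-Civita connection of the pseudo-Kähler metric g(x,y) = Re H(x,y) is ∇_x y = (R_x - R_x*) y, and the Riemannian curvature is R(x,y) = 3 R_x R_y* - 3 R_y R_x* + R_x* R_y - R_y* R_x. -/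
namespace APK

variable {U : Type*}

section Form

variable [AddCommGroup U] {H : U → U → ℂ}

theorem herm_sub_left (Hadd : ∀ x x' y : U, H (x + x') y = H x y + H x' y) (x x' y : U) :
    H (x - x') y = H x y - H x' y :=
  (AddMonoidHom.mk' (H · y) (Hadd · · y)).map_sub x x'

theorem herm_sub_right (Hadd : ∀ x x' y : U, H (x + x') y = H x y + H x' y)
    (Hherm : ∀ x y : U, H x y = starRingEnd ℂ (H y x)) (x y y' : U) :
    H x (y - y') = H x y - H x y' := by
  rw [Hherm, herm_sub_left Hadd, map_sub, ← Hherm, ← Hherm]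

theorem eq_of_forall_herm_eq (Hadd : ∀ x x' y : U, H (x + x') y = H x y + H x' y)
    (Hnd : ∀ x : U, (∀ y : U, H x y = 0) → x = 0) {a b : U} (h : ∀ w, H a w = H b w) :
    a = b :=
  sub_eq_zero.mp <| Hnd _ fun w => by rw [herm_sub_left Hadd, h w, sub_self]

theorem eq_zero_of_forall_re_herm_eq_zero [Module ℂ U]
    (Hsmul : ∀ (c : ℂ) (x y : U), H (c • x) y = c * H x y)
    (Hherm : ∀ x y : U, H x y = starRingEnd ℂ (H y x))
    (Hnd : ∀ x : U, (∀ y : U, H x y = 0) → x = 0) {a : U} (h : ∀ w, (H a w).re = 0) :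
    a = 0 := by
  refine Hnd a fun w => Complex.ext (h w) ?_
  have h_smul_right : H a (Complex.I • w) = -Complex.I * H a w := by
    rw [Hherm, Hsmul, map_mul, ← Hherm, Complex.conj_I]
  simpa [h_smul_right, Complex.mul_re] using h (Complex.I • w)

end Form

section Adjoint

variable [NonUnitalCommRing U] {H : U → U → ℂ} {Rstar : U → U → U}

theorem herm_Rstar_right (Hherm : ∀ x y : U, H x y = starRingEnd ℂ (H y x))
    (hadj : ∀ z x y : U, H (Rstar z x) y = H x (z * y)) (c u v : U) :
    H u (Rstar c v) = H (c * u) v := by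
  rw [Hherm, hadj, ← Hherm]

theorem Rstar_sub_left (Hadd : ∀ x x' y : U, H (x + x') y = H x y + H x' y)
    (Hherm : ∀ x y : U, H x y = starRingEnd ℂ (H y x))
    (Hnd : ∀ x : U, (∀ y : U, H x y = 0) → x = 0)
    (hadj : ∀ z x y : U, H (Rstar z x) y = H x (z * y)) (a b z : U) :
    Rstar (a - b) z = Rstar a z - Rstar b z :=
  eq_of_forall_herm_eq Hadd Hnd fun w => by
    rw [hadj, herm_sub_left Hadd, hadj, hadj, sub_mul, herm_sub_right Hadd Hherm]

theorem Rstar_sub_right (Hadd : ∀ x x' y : U, H (x + x') y = H x y + H x' y)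
    (Hnd : ∀ x : U, (∀ y : U, H x y = 0) → x = 0)
    (hadj : ∀ z x y : U, H (Rstar z x) y = H x (z * y)) (x u v : U) :
    Rstar x (u - v) = Rstar x u - Rstar x v :=
  eq_of_forall_herm_eq Hadd Hnd fun w => by
    rw [hadj, herm_sub_left Hadd, herm_sub_left Hadd, hadj, hadj]

theorem Rstar_comm (Hadd : ∀ x x' y : U, H (x + x') y = H x y + H x' y)
    (Hnd : ∀ x : U, (∀ y : U, H x y = 0) → x = 0)
    (hadj : ∀ z x y : U, H (Rstar z x) y = H x (z * y)) (x y z : U) :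
    Rstar x (Rstar y z) = Rstar y (Rstar x z) :=
  eq_of_forall_herm_eq Hadd Hnd fun w => by
    rw [hadj, hadj, hadj, hadj, mul_left_comm]

theorem Rstar_Rstar (Hadd : ∀ x x' y : U, H (x + x') y = H x y + H x' y)
    (Hherm : ∀ x y : U, H x y = starRingEnd ℂ (H y x))
    (Hnd : ∀ x : U, (∀ y : U, H x y = 0) → x = 0)
    (hadj : ∀ z x y : U, H (Rstar z x) y = H x (z * y))
    (hapk : ∀ x y z : U, x * Rstar z y = y * Rstar z x) (x y z : U) :
    Rstar (Rstar y x) z = y * Rstar x z :=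
  eq_of_forall_herm_eq Hadd Hnd fun w => by
    rw [hadj, mul_comm, hapk w x y, ← hadj, herm_Rstar_right Hherm hadj, mul_comm]

theorem brkt_mul (hapk : ∀ x y z : U, x * Rstar z y = y * Rstar z x) (x y z : U) :
    brkt Rstar x y * z = x * Rstar y z - y * Rstar x z := by
  rw [brkt, sub_mul, mul_comm _ z, mul_comm _ z, hapk z x y, hapk z y x]

theorem Rstar_brkt (Hadd : ∀ x x' y : U, H (x + x') y = H x y + H x' y)
    (Hherm : ∀ x y : U, H x y = starRingEnd ℂ (H y x))
    (Hnd : ∀ x : U, (∀ y : U, H x y = 0) → x = 0)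
    (hadj : ∀ z x y : U, H (Rstar z x) y = H x (z * y))
    (hapk : ∀ x y z : U, x * Rstar z y = y * Rstar z x) (x y z : U) :
    Rstar (brkt Rstar x y) z = y * Rstar x z - x * Rstar y z := by
  rw [brkt, Rstar_sub_left Hadd Hherm Hnd hadj, Rstar_Rstar Hadd Hherm Hnd hadj hapk,
    Rstar_Rstar Hadd Hherm Hnd hadj hapk]

end Adjoint

/-- In the paper's notation, `leviCivita Rstar x = R_x - R_x*`. -/
def leviCivita [NonUnitalNonAssocRing U] (Rstar : U → U → U) (x y : U) : U :=
  x * y - Rstar x y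

section LeviCivita

variable [NonUnitalCommRing U] {H : U → U → ℂ} {Rstar : U → U → U}

theorem koszul_leviCivita (Hadd : ∀ x x' y : U, H (x + x') y = H x y + H x' y)
    (Hherm : ∀ x y : U, H x y = starRingEnd ℂ (H y x))
    (hadj : ∀ z x y : U, H (Rstar z x) y = H x (z * y)) (x y z : U) :
    2 * (H (leviCivita Rstar x y) z).re =
      (H (brkt Rstar x y) z).re - (H (brkt Rstar y z) x).re + (H (brkt Rstar z x) y).re := by
  have h_re_symm : (H (x * y) z).re = (H z (x * y)).re := by
    rw [Hherm]
    exact Complex.conj_re _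
  simp only [leviCivita, brkt, herm_sub_left Hadd, hadj, Complex.sub_re]
  rw [h_re_symm, mul_comm z x, mul_comm y x, mul_comm z y]
  ring

theorem eq_of_koszul [Module ℂ U] (Hadd : ∀ x x' y : U, H (x + x') y = H x y + H x' y)
    (Hsmul : ∀ (c : ℂ) (x y : U), H (c • x) y = c * H x y)
    (Hherm : ∀ x y : U, H x y = starRingEnd ℂ (H y x))
    (Hnd : ∀ x : U, (∀ y : U, H x y = 0) → x = 0) {nabla nabla' : U → U → U}
    (hK : ∀ x y z : U, 2 * (H (nabla x y) z).re =
      (H (brkt Rstar x y) z).re - (H (brkt Rstar y z) x).re + (H (brkt Rstar z x) y).re)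
    (hK' : ∀ x y z : U, 2 * (H (nabla' x y) z).re =
      (H (brkt Rstar x y) z).re - (H (brkt Rstar y z) x).re + (H (brkt Rstar z x) y).re) :
    nabla = nabla' := by
  ext x y
  refine sub_eq_zero.mp <| eq_zero_of_forall_re_herm_eq_zero Hsmul Hherm Hnd fun w => ?_
  rw [herm_sub_left Hadd, Complex.sub_re]
  linarith [hK x y w, hK' x y w]

theorem curvature_leviCivita [Module ℂ U] (Hadd : ∀ x x' y : U, H (x + x') y = H x y + H x' y)
    (Hherm : ∀ x y : U, H x y = starRingEnd ℂ (H y x))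
    (Hnd : ∀ x : U, (∀ y : U, H x y = 0) → x = 0)
    (hadj : ∀ z x y : U, H (Rstar z x) y = H x (z * y))
    (hapk : ∀ x y z : U, x * Rstar z y = y * Rstar z x) (x y z : U) :
    leviCivita Rstar (brkt Rstar x y) z - leviCivita Rstar x (leviCivita Rstar y z) +
        leviCivita Rstar y (leviCivita Rstar x z) =
      (3 : ℂ) • (x * Rstar y z) - (3 : ℂ) • (y * Rstar x z) +
        Rstar x (y * z) - Rstar y (x * z) := by
  simp only [leviCivita, mul_sub, Rstar_sub_right Hadd Hnd hadj, brkt_mul hapk,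
    Rstar_brkt Hadd Hherm Hnd hadj hapk, Rstar_comm Hadd Hnd hadj y x, mul_left_comm y x z,
    ofNat_smul_eq_nsmul]
  abel

end LeviCivita

end APK

open APK in
theorem apk_leviCivita_and_curvature_general
    {U : Type*} [NonUnitalCommRing U] [Module ℂ U]
    (H : U → U → ℂ)
    (Hadd : ∀ x x' y : U, H (x + x') y = H x y + H x' y)
    (Hsmul : ∀ (c : ℂ) (x y : U), H (c • x) y = c * H x y)
    (Hherm : ∀ x y : U, H x y = starRingEnd ℂ (H y x))
    (Hnd : ∀ x : U, (∀ y : U, H x y = 0) → x = 0)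
    (Rstar : U → U → U)
    (hadj : ∀ z x y : U, H (Rstar z x) y = H x (z * y))
    (hapk : ∀ x y z : U, x * Rstar z y = y * Rstar z x) :
    ∀ nabla : U → U → U,
      (∀ x y z : U,
        2 * (H (nabla x y) z).re =
          (H (brkt Rstar x y) z).re - (H (brkt Rstar y z) x).re +
            (H (brkt Rstar z x) y).re) →
      (∀ x y : U, nabla x y = x * y - Rstar x y) ∧
      (∀ x y z : U,
        nabla (brkt Rstar x y) z - nabla x (nabla y z) + nabla y (nabla x z) =
          (3 : ℂ) • (x * Rstar y z) - (3 : ℂ) • (y * Rstar x z) +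
            Rstar x (y * z) - Rstar y (x * z)) := by
  intro nabla hK
  obtain rfl : nabla = leviCivita Rstar :=
    eq_of_koszul Hadd Hsmul Hherm Hnd hK (koszul_leviCivita Hadd Hherm hadj)
  exact ⟨fun _ _ => rfl, curvature_leviCivita Hadd Hherm Hnd hadj hapk⟩

/-- For an APK-compatible pair, the Levi-Civita connection of the pseudo-Kähler
metric `g = Re H` (determined by the Koszul formula) is `∇ₓ y = (R_x - R_x*) y`,
and the curvature `R(x,y) = ∇_{[x,y]} - [∇ₓ, ∇_y]` is
`3 R_x R_y* - 3 R_y R_x* + R_x* R_y - R_y* R_x`. -/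
theorem apk_leviCivita_and_curvature
    {U : Type*} [NonUnitalCommRing U] [Module ℂ U]
    [SMulCommClass ℂ U U] [IsScalarTower ℂ U U] [FiniteDimensional ℂ U]
    (H : U → U → ℂ)
    (Hadd : ∀ x x' y : U, H (x + x') y = H x y + H x' y)
    (Hsmul : ∀ (c : ℂ) (x y : U), H (c • x) y = c * H x y)
    (Hherm : ∀ x y : U, H x y = starRingEnd ℂ (H y x))
    (Hnd : ∀ x : U, (∀ y : U, H x y = 0) → x = 0)
    (Rstar : U → U → U)
    (hadj : ∀ z x y : U, H (Rstar z x) y = H x (z * y))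
    (hapk : ∀ x y z : U, x * Rstar z y = y * Rstar z x) :
    ∀ nabla : U → U → U,
      (∀ x y z : U,
        2 * (H (nabla x y) z).re =
          (H (brkt Rstar x y) z).re - (H (brkt Rstar y z) x).re +
            (H (brkt Rstar z x) y).re) →
      (∀ x y : U, nabla x y = x * y - Rstar x y) ∧
      (∀ x y z : U,
        nabla (brkt Rstar x y) z - nabla x (nabla y z) + nabla y (nabla x z) =
          (3 : ℂ) • (x * Rstar y z) - (3 : ℂ) • (y * Rstar x z) +
            Rstar x (y * z) - Rstar y (x * z)) :=
  apk_leviCivita_and_curvature_general H Hadd Hsmul Hherm Hnd Rstar hadj hapk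
end

section
/- Let (U, H) be an APK-compatible pair. The pseudo-Kähler metric on g_U is flat (i.e. 3 R_x R_y* - 3 R_y R_x* + R_x* R_y - R_y* R_x = 0 for all x, y) if and only if 3 R_x R_x* = R_x* R_x for all x ∈ U. -/
/-!
Nondegeneracy of `H` makes `R_z*` complex-linear in its argument and conjugate-linear in `z`.
With `D(x) z = 3 x R_x* z - R_x*(x z)`, sesquilinearity then gives `R(x, i x) = -2i D(x)` and the
polarization identity `R(x, y) = i (D(x + i y) - D(x) - D(y))`, so `R` vanishes iff `D` does.
-/

open Complex ComplexConjugate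

namespace APK

section HermitianForm

variable {U : Type*} {H : U → U → ℂ}

theorem map_add_right_of_hermitian [AddCommGroup U]
    (Hadd : ∀ x x' y : U, H (x + x') y = H x y + H x' y)
    (Hherm : ∀ x y : U, H x y = conj (H y x)) (x y y' : U) :
    H x (y + y') = H x y + H x y' := by
  rw [Hherm, Hadd, map_add, ← Hherm, ← Hherm]

theorem map_smul_right_of_hermitian [SMul ℂ U]
    (Hsmul : ∀ (c : ℂ) (x y : U), H (c • x) y = c * H x y)
    (Hherm : ∀ x y : U, H x y = conj (H y x)) (c : ℂ) (x y : U) :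
    H x (c • y) = conj c * H x y := by
  rw [Hherm, Hsmul, map_mul, ← Hherm]

theorem eq_of_forall_left_eq [AddCommGroup U]
    (Hadd : ∀ x x' y : U, H (x + x') y = H x y + H x' y)
    (Hnd : ∀ x : U, (∀ y : U, H x y = 0) → x = 0) {a b : U} (hab : ∀ w, H a w = H b w) :
    a = b := by
  refine sub_eq_zero.mp (Hnd _ fun w => ?_)
  have hsplit := Hadd (a - b) b w
  rw [sub_add_cancel, hab] at hsplit
  linear_combination -hsplit

end HermitianForm

section Adjoint

variable {U : Type*} [NonUnitalNonAssocRing U] [Module ℂ U] [IsScalarTower ℂ U U]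

theorem exists_sesquilinear_eq_adjoint (H : U → U → ℂ)
    (Hadd : ∀ x x' y : U, H (x + x') y = H x y + H x' y)
    (Hsmul : ∀ (c : ℂ) (x y : U), H (c • x) y = c * H x y)
    (Hherm : ∀ x y : U, H x y = conj (H y x))
    (Hnd : ∀ x : U, (∀ y : U, H x y = 0) → x = 0)
    (Rstar : U → U → U) (hadj : ∀ z x y : U, H (Rstar z x) y = H x (z * y)) :
    ∃ R : U →ₗ⋆[ℂ] U →ₗ[ℂ] U, (fun z x => R z x) = Rstar := by
  have ext : ∀ {a b : U}, (∀ w, H a w = H b w) → a = b := eq_of_forall_left_eq Hadd Hnd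
  refine ⟨LinearMap.mk₂'ₛₗ _ _ Rstar (fun z z' x => ext fun w => ?_)
    (fun c z x => ext fun w => ?_) (fun z x x' => ext fun w => ?_)
    (fun c z x => ext fun w => ?_), rfl⟩
  · rw [hadj, add_mul, map_add_right_of_hermitian Hadd Hherm, Hadd, hadj, hadj]
  · rw [hadj, smul_mul_assoc, map_smul_right_of_hermitian Hsmul Hherm, Hsmul, hadj]
  · rw [hadj, Hadd, Hadd, hadj, hadj]
  · rw [hadj, RingHom.id_apply, Hsmul, Hsmul, hadj]

end Adjoint

section Curvature

variable {U : Type*} [NonUnitalNonAssocRing U] [Module ℂ U] [IsScalarTower ℂ U U]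
  [SMulCommClass ℂ U U] (R : U →ₗ⋆[ℂ] U →ₗ[ℂ] U)

def curvature (x y z : U) : U :=
  (3 : ℂ) • (x * R y z) - (3 : ℂ) • (y * R x z) + R x (y * z) - R y (x * z)

def curvatureDiag (x z : U) : U :=
  (3 : ℂ) • (x * R x z) - R x (x * z)

theorem curvature_eq_polarization (x y z : U) :
    curvature R x y z =
      I • (curvatureDiag R (x + I • y) z - curvatureDiag R x z - curvatureDiag R y z) := by
  simp only [curvature, curvatureDiag, map_add, map_smulₛₗ, LinearMap.add_apply,
    LinearMap.smul_apply, LinearMap.neg_apply, RingHom.id_apply, conj_I, neg_smul, mul_add,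
    add_mul, smul_mul_assoc, mul_smul_comm, mul_neg]
  match_scalars <;> ring_nf <;> simp only [I_sq, I_pow_three] <;> ring

theorem curvature_smul_I_self (x z : U) :
    curvature R x (I • x) z = (-2 * I) • curvatureDiag R x z := by
  simp only [curvature, curvatureDiag, map_smulₛₗ, LinearMap.smul_apply, LinearMap.neg_apply,
    RingHom.id_apply, conj_I, neg_smul, smul_mul_assoc, mul_smul_comm, mul_neg]
  module

theorem forall_curvature_eq_zero_iff :
    (∀ x y z : U, curvature R x y z = 0) ↔ ∀ x z : U, curvatureDiag R x z = 0 := by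
  constructor
  · intro hflat x z
    have h := curvature_smul_I_self R x z
    rwa [hflat, eq_comm, smul_eq_zero, or_iff_right (by simp [I_ne_zero])] at h
  · intro hdiag x y z
    simp only [curvature_eq_polarization, hdiag, sub_zero, smul_zero]

end Curvature

end APK

theorem apk_flat_iff_general
    {U : Type*} [NonUnitalCommRing U] [Module ℂ U]
    [SMulCommClass ℂ U U] [IsScalarTower ℂ U U]
    (H : U → U → ℂ)
    (Hadd : ∀ x x' y : U, H (x + x') y = H x y + H x' y)
    (Hsmul : ∀ (c : ℂ) (x y : U), H (c • x) y = c * H x y)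
    (Hherm : ∀ x y : U, H x y = starRingEnd ℂ (H y x))
    (Hnd : ∀ x : U, (∀ y : U, H x y = 0) → x = 0)
    (Rstar : U → U → U)
    (hadj : ∀ z x y : U, H (Rstar z x) y = H x (z * y)) :
    (∀ x y z : U,
      (3 : ℂ) • (x * Rstar y z) - (3 : ℂ) • (y * Rstar x z) +
        Rstar x (y * z) - Rstar y (x * z) = 0) ↔
    (∀ x z : U, (3 : ℂ) • (x * Rstar x z) = Rstar x (x * z)) := by
  obtain ⟨R, rfl⟩ := APK.exists_sesquilinear_eq_adjoint H Hadd Hsmul Hherm Hnd Rstar hadj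
  exact (APK.forall_curvature_eq_zero_iff R).trans
    (by simp only [APK.curvatureDiag, sub_eq_zero])

/-- For an APK-compatible pair, the pseudo-Kähler metric on `g_U` is flat
(`3 R_x R_y* - 3 R_y R_x* + R_x* R_y - R_y* R_x = 0` for all `x, y`) iff
`3 R_x R_x* = R_x* R_x` for all `x`. -/
theorem apk_flat_iff
    {U : Type*} [NonUnitalCommRing U] [Module ℂ U]
    [SMulCommClass ℂ U U] [IsScalarTower ℂ U U] [FiniteDimensional ℂ U]
    (H : U → U → ℂ)
    (Hadd : ∀ x x' y : U, H (x + x') y = H x y + H x' y)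
    (Hsmul : ∀ (c : ℂ) (x y : U), H (c • x) y = c * H x y)
    (Hherm : ∀ x y : U, H x y = starRingEnd ℂ (H y x))
    (Hnd : ∀ x : U, (∀ y : U, H x y = 0) → x = 0)
    (Rstar : U → U → U)
    (hadj : ∀ z x y : U, H (Rstar z x) y = H x (z * y))
    (hapk : ∀ x y z : U, x * Rstar z y = y * Rstar z x) :
    (∀ x y z : U,
      (3 : ℂ) • (x * Rstar y z) - (3 : ℂ) • (y * Rstar x z) +
        Rstar x (y * z) - Rstar y (x * z) = 0) ↔
    (∀ x z : U, (3 : ℂ) • (x * Rstar x z) = Rstar x (x * z)) :=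
  apk_flat_iff_general H Hadd Hsmul Hherm Hnd Rstar hadj
end

section
/- Let (U, H) be an APK-compatible pair with U nilpotent. Then the Ricci curvature Ric(x,y) = -2 trace(R_y R_x*) vanishes identically; in particular, every unimodular pseudo-Kähler Lie algebra with abelian complex structure is Ricci flat. -/
theorem iterate_mul_left_succ_apply {U : Type*} [Semigroup U] (w z : U) (k : ℕ) :
    (w * ·)^[k + 1] z = prodSeq (fun _ => w) k * z := by
  induction k generalizing z with
  | zero => rfl
  | succ k ih => rw [Function.iterate_succ_apply, ih, prodSeq, mul_assoc]

theorem LinearMap.isNilpotent_of_eq_mul_left {R U : Type*} [Semiring R] [NonUnitalSemiring U]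
    [Module R U] {n : ℕ} (hn : ∀ f : ℕ → U, prodSeq f n = 0) {w : U} {T : U →ₗ[R] U}
    (hT : ∀ z : U, T z = w * z) : IsNilpotent T := by
  have hT' : ⇑T = (w * ·) := funext hT
  refine ⟨n + 1, LinearMap.ext fun z => ?_⟩
  rw [Module.End.pow_apply, hT', iterate_mul_left_succ_apply, hn, zero_mul, LinearMap.zero_apply]

theorem apk_nilpotent_ricci_flat_general
    {U : Type*} [NonUnitalCommRing U]
    (Rstar : U → U → U)
    (hapk : ∀ x y z : U, x * Rstar z y = y * Rstar z x)
    [Module ℝ U]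
    (hnil : ∃ n : ℕ, ∀ f : ℕ → U, prodSeq f n = 0) :
    ∀ x y : U, ∀ T : U →ₗ[ℝ] U, (∀ z : U, T z = y * Rstar x z) →
      (-2 : ℝ) * LinearMap.trace ℝ U T = 0 := by
  intro x y T hT
  obtain ⟨n, hn⟩ := hnil
  have hT_mul : ∀ z : U, T z = Rstar x y * z := fun z => by rw [hT, hapk, mul_comm]
  have hT_nil : IsNilpotent T := LinearMap.isNilpotent_of_eq_mul_left hn hT_mul
  rw [(LinearMap.isNilpotent_trace_of_isNilpotent hT_nil).eq_zero, mul_zero]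

/-- For an APK-compatible pair with `U` nilpotent, the Ricci curvature
`Ric(x,y) = -2 trace(R_y R_x*)` vanishes identically: every unimodular
pseudo-Kähler Lie algebra with abelian complex structure is Ricci flat. -/
theorem apk_nilpotent_ricci_flat
    {U : Type*} [NonUnitalCommRing U] [Module ℂ U]
    [SMulCommClass ℂ U U] [IsScalarTower ℂ U U] [FiniteDimensional ℂ U]
    (H : U → U → ℂ)
    (Hadd : ∀ x x' y : U, H (x + x') y = H x y + H x' y)
    (Hsmul : ∀ (c : ℂ) (x y : U), H (c • x) y = c * H x y)
    (Hherm : ∀ x y : U, H x y = starRingEnd ℂ (H y x))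
    (Hnd : ∀ x : U, (∀ y : U, H x y = 0) → x = 0)
    (Rstar : U → U → U)
    (hadj : ∀ z x y : U, H (Rstar z x) y = H x (z * y))
    (hapk : ∀ x y z : U, x * Rstar z y = y * Rstar z x)
    [Module ℝ U] [IsScalarTower ℝ ℂ U] [FiniteDimensional ℝ U]
    (hnil : ∃ n : ℕ, ∀ f : ℕ → U, prodSeq f n = 0) :
    ∀ x y : U, ∀ T : U →ₗ[ℝ] U, (∀ z : U, T z = y * Rstar x z) →
      (-2 : ℝ) * LinearMap.trace ℝ U T = 0 :=
  apk_nilpotent_ricci_flat_general Rstar hapk hnil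
end
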